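/- arXiv:1301.0252 — 14 statements merged into one kernel-verified Lean document; each statement's English description precedes it below -/
import Mathlib

section
/- For every prime p and nonnegative integers n, m, n₀, m₀ with n₀ < p and m₀ < p, the binomial coefficient C(n·p + n₀, m·p + m₀) is congruent to C(n,m)·C(n₀,m₀) modulo p. -/
theorem Nat.mul_add_div_of_lt {a b c : ℕ} (hc : c < b) : (a * b + c) / b = a := by
  rw [add_comm, Nat.add_mul_div_right _ _ (c.zero_le.trans_lt hc), Nat.div_eq_of_lt hc, zero_add]

theorem stmt0 (p : ℕ) (hp : p.Prime) (n m n0 m0 : ℕ) (hn0 : n0 < p) (hm0 : m0 < p) :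
    (n * p + n0).choose (m * p + m0) ≡ n.choose m * n0.choose m0 [MOD p] := by
  have : Fact p.Prime := ⟨hp⟩
  have lucas := Choose.choose_modEq_choose_mod_mul_choose_div_nat (p := p)
    (n := n * p + n0) (k := m * p + m0)
  rwa [Nat.mul_add_mod_of_lt hn0, Nat.mul_add_mod_of_lt hm0, Nat.mul_add_div_of_lt hn0,
    Nat.mul_add_div_of_lt hm0, mul_comm (n0.choose m0)] at lucas
end

section
/- For every prime p and nonnegative integers n, m, n₀, m₀ with n₀ < p and m₀ < p, the binomial coefficient C(n·p² + n₀, m·p² + m₀) is congruent to C(n,m)·C(n₀,m₀) modulo p². -/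
/-!
Induct on `n` using Vandermonde's identity `C(p² + a, K) = ∑ C(p², i) C(a, K - i)`, where the
base-`p` digits of `a` and `K` in position `1` vanish. Every term with `0 < i < p²` is then
divisible by `p²`: if `p ∤ i` then already `p² ∣ C(p², i)`; if `i = p k` with `0 < k < p` then
`p ∣ C(p², i)`, and the digit of `K - i` in position `1` is nonzero, so `p ∣ C(a, K - i)` by
Lucas' theorem. The terms `i = 0` and `i = p²` that remain give Pascal's rule for `C(n, m)`.
-/

open Finset

namespace Nat

theorem dvd_mul_choose (n k : ℕ) : n ∣ k * n.choose k := by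
  rcases n with _ | n
  · rcases k with _ | k <;> simp
  rcases k with _ | k
  · simp
  · exact ⟨n.choose k, by rw [mul_comm, add_one_mul_choose_eq]⟩

theorem Coprime.dvd_choose {n k : ℕ} (h : n.Coprime k) : n ∣ n.choose k :=
  h.dvd_of_dvd_mul_left (dvd_mul_choose n k)

theorem mul_sq_add_div_mod_eq_zero {p q r : ℕ} (hr : r < p) : (q * p ^ 2 + r) / p % p = 0 := by
  have hp : 0 < p := zero_lt_of_lt hr
  rw [add_comm, sq, ← mul_assoc, add_mul_div_right _ _ hp, div_eq_of_lt hr, zero_add,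
    mul_mod_left]

namespace Prime

variable {p : ℕ}

theorem dvd_choose_of_digit_lt (hp : p.Prime) {n k i : ℕ}
    (h : n / p ^ i % p < k / p ^ i % p) : p ∣ n.choose k := by
  have := Fact.mk hp
  induction i generalizing n k with
  | zero =>
    refine modEq_zero_iff_dvd.1 (Choose.choose_modEq_choose_mod_mul_choose_div_nat.trans ?_)
    rw [choose_eq_zero_of_lt (by simpa using h), zero_mul]
  | succ i ih =>
    rw [pow_succ', ← Nat.div_div_eq_div_mul, ← Nat.div_div_eq_div_mul] at h
    exact (Choose.choose_modEq_choose_mod_mul_choose_div_nat.dvd_iff dvd_rfl).2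
      (dvd_mul_of_dvd_right (ih h) _)

theorem sq_dvd_choose_sq_mul_choose (hp : p.Prime) {a i j : ℕ} (ha : a / p % p = 0)
    (hij : (i + j) / p % p = 0) (hi₀ : i ≠ 0) (hi : i ≠ p ^ 2) :
    p ^ 2 ∣ (p ^ 2).choose i * a.choose j := by
  rcases hi.lt_or_gt with hlt | hgt
  swap
  · simp [choose_eq_zero_of_lt hgt]
  by_cases hpi : p ∣ i
  · obtain ⟨k, rfl⟩ := hpi
    have hkp : k < p := by nlinarith
    suffices p ∣ a.choose j by
      simpa only [sq] using mul_dvd_mul (hp.dvd_choose_pow hi₀ hi) this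
    refine hp.dvd_choose_of_digit_lt (i := 1) ?_
    rw [pow_one, ha, pos_iff_ne_zero]
    intro hj
    rw [mul_add_div hp.pos, add_mod, hj, add_zero, mod_mod, mod_eq_of_lt hkp] at hij
    simp [hij] at hi₀
  · exact dvd_mul_of_dvd_left ((Coprime.pow_left 2 (hp.coprime_iff_not_dvd.2 hpi)).dvd_choose) _

theorem cast_choose_sq_add_of_lt (hp : p.Prime) {a K : ℕ} (ha : a / p % p = 0) (hK : K < p) :
    ((p ^ 2 + a).choose K : ZMod (p ^ 2)) = a.choose K := by
  have hKp : K < p ^ 2 := hK.trans_le (le_self_pow₀ hp.one_le two_ne_zero)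
  rw [add_choose_eq, cast_sum, sum_eq_single (0, K)]
  · simp
  · rintro ⟨i, j⟩ hij hne
    rw [HasAntidiagonal.mem_antidiagonal] at hij
    refine (ZMod.natCast_eq_zero_iff _ _).2 (hp.sq_dvd_choose_sq_mul_choose ha ?_ ?_ ?_)
    · rw [hij, div_eq_of_lt hK, zero_mod]
    · rintro rfl
      exact hne (by simp_all)
    · omega
  · simp

theorem cast_choose_sq_add_add_sq (hp : p.Prime) {a K : ℕ} (ha : a / p % p = 0)
    (hK : K / p % p = 0) :
    ((p ^ 2 + a).choose (K + p ^ 2) : ZMod (p ^ 2)) = a.choose (K + p ^ 2) + a.choose K := by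
  rw [add_choose_eq, cast_sum, sum_eq_add (0, K + p ^ 2) (p ^ 2, K)]
  · simp
  · simp [hp.ne_zero]
  · rintro ⟨i, j⟩ hij ⟨h₀, hsq⟩
    rw [HasAntidiagonal.mem_antidiagonal] at hij
    refine (ZMod.natCast_eq_zero_iff _ _).2 (hp.sq_dvd_choose_sq_mul_choose ha ?_ ?_ ?_)
    · rwa [hij, sq, add_mul_div_right _ _ hp.pos, add_mod_right]
    · rintro rfl
      exact h₀ (by simp_all)
    · rintro rfl
      exact hsq (Prod.ext rfl (by omega))
  · simp
  · simp [add_comm]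

theorem cast_choose_mul_sq_add (hp : p.Prime) {n₀ m₀ : ℕ} (hn₀ : n₀ < p) (hm₀ : m₀ < p)
    (n m : ℕ) :
    ((n * p ^ 2 + n₀).choose (m * p ^ 2 + m₀) : ZMod (p ^ 2)) = n.choose m * n₀.choose m₀ := by
  induction n generalizing m with
  | zero =>
    rcases m with _ | m
    · simp
    · have : n₀ < (m + 1) * p ^ 2 + m₀ := by nlinarith [hp.one_lt]
      simp [choose_eq_zero_of_lt this]
  | succ n ih =>
    have ha := mul_sq_add_div_mod_eq_zero (q := n) hn₀
    rw [add_one_mul, add_comm (n * p ^ 2), add_assoc]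
    rcases m with _ | m
    · simpa [cast_choose_sq_add_of_lt hp ha hm₀] using ih 0
    · rw [add_one_mul, add_right_comm,
        cast_choose_sq_add_add_sq hp ha (mul_sq_add_div_mod_eq_zero hm₀), ih m,
        show m * p ^ 2 + m₀ + p ^ 2 = (m + 1) * p ^ 2 + m₀ by ring, ih, choose_succ_succ',
        cast_add]
      ring

end Prime

end Nat

theorem stmt1 (p : ℕ) (hp : p.Prime) (n m n0 m0 : ℕ) (hn0 : n0 < p) (hm0 : m0 < p) :
    (n * p ^ 2 + n0).choose (m * p ^ 2 + m0) ≡ n.choose m * n0.choose m0 [MOD p ^ 2] := by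
  rw [← ZMod.natCast_eq_natCast_iff]
  push_cast
  exact hp.cast_choose_mul_sq_add hn0 hm0 n m
end

section
/- For every prime p ≥ 5 and nonnegative integers n, m, n₀, m₀ with n₀ < p and m₀ < p, the binomial coefficient C(n·p³ + n₀, m·p³ + m₀) is congruent to C(n,m)·C(n₀,m₀) modulo p³. -/
/-!
By Vandermonde, `C(np³ + n₀, mp³ + m₀) = ∑_{i + j = mp³ + m₀} C(np³, i) C(n₀, j)`. When `j ≤ n₀`
and `j ≠ m₀`, the index `i` is prime to `p`, and `i C(np³, i) = np³ C(np³ - 1, i - 1)` gives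
`p³ ∣ C(np³, i)`; only `C(np³, mp³) C(n₀, m₀)` survives. Jacobsthal's congruence
`C(np, mp) ≡ C(n, m) mod p³`, applied three times, finishes the proof.

For Jacobsthal, `(ap)! = p^a a! ∏_{i<a} ∏_{0<r<p} (ip + r)`, and every block `∏_{0<r<p} (ip + r)`
is `≡ (p-1)! mod p³`. Pairing `r` with `p - r` gives `(ip + r)(ip + p - r) = r(p - r) + (i² + i)p²`,
so modulo `p³` the square of the block is `(p-1)!² + (i² + i)p² ∑_r ∏_{t ≠ r} t(p - t)`, and the
sum is `≡ -(p-1)!² ∑_r r⁻² ≡ 0 mod p` because `∑_{x ∈ 𝔽_p} x² = 0` for `p ≥ 5`. The block and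
`(p-1)!` are both `≡ -1 mod p`, so their sum is a unit and equal squares force equality.
-/

open Finset Nat

theorem Finset.prod_add_of_mul_self_eq_zero {ι R : Type*} [CommSemiring R] [DecidableEq ι]
    {c : R} (hc : c * c = 0) (s : Finset ι) (a : ι → R) :
    ∏ r ∈ s, (a r + c) = ∏ r ∈ s, a r + c * ∑ r ∈ s, ∏ t ∈ s.erase r, a t := by
  induction s using Finset.induction_on with
  | empty => simp
  | insert x s hx ih =>
    have hsum : ∑ r ∈ s, ∏ t ∈ (insert x s).erase r, a t
        = a x * ∑ r ∈ s, ∏ t ∈ s.erase r, a t := by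
      rw [mul_sum]
      refine sum_congr rfl fun r hr => ?_
      rw [erase_insert_of_ne (ne_of_mem_of_not_mem hr hx).symm,
        prod_insert fun h => hx (mem_of_mem_erase h)]
    rw [prod_insert hx, ih, prod_insert hx, sum_insert hx, erase_insert hx, hsum]
    calc (a x + c) * (∏ r ∈ s, a r + c * ∑ r ∈ s, ∏ t ∈ s.erase r, a t)
        = a x * ∏ r ∈ s, a r + c * (∏ r ∈ s, a r + a x * ∑ r ∈ s, ∏ t ∈ s.erase r, a t)
          + c * c * ∑ r ∈ s, ∏ t ∈ s.erase r, a t := by ring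
      _ = _ := by rw [hc, zero_mul, add_zero]

theorem Finset.sum_prod_erase_eq_prod_mul_sum_inv {ι K : Type*} [Semifield K] [DecidableEq ι]
    {s : Finset ι} {b : ι → K} (hb : ∀ r ∈ s, b r ≠ 0) :
    ∑ r ∈ s, ∏ t ∈ s.erase r, b t = (∏ t ∈ s, b t) * ∑ r ∈ s, (b r)⁻¹ := by
  rw [mul_sum]
  refine sum_congr rfl fun r hr => ?_
  rw [eq_mul_inv_iff_mul_eq₀ (hb r hr)]
  exact prod_erase_mul _ _ hr

theorem ZMod.sum_range_natCast {n : ℕ} [NeZero n] {M : Type*} [AddCommMonoid M]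
    (f : ZMod n → M) : ∑ r ∈ range n, f r = ∑ x : ZMod n, f x :=
  sum_nbij' (↑) ZMod.val (fun _ _ => mem_univ _) (fun x _ => mem_range.2 x.val_lt)
    (fun _ hr => ZMod.val_cast_of_lt (mem_range.1 hr)) (fun x _ => ZMod.natCast_zmod_val x)
    fun _ _ => rfl

theorem ZMod.natCast_ne_zero_of_mem_Ico {p r : ℕ} (hr : r ∈ Ico 1 p) : (r : ZMod p) ≠ 0 := by
  obtain ⟨h1, h2⟩ := mem_Ico.1 hr
  rw [Ne, ZMod.natCast_eq_zero_iff]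
  exact fun h => (Nat.le_of_dvd h1 h).not_gt h2

theorem ZMod.sum_Ico_inv_sq_eq_zero {p : ℕ} [Fact p.Prime] (hp5 : 5 ≤ p) :
    ∑ r ∈ Ico 1 p, ((r : ZMod p) ^ 2)⁻¹ = 0 := by
  have hsq : ∑ x : ZMod p, x ^ 2 = 0 :=
    FiniteField.sum_pow_lt_card_sub_one (ZMod p) 2 (by rw [ZMod.card]; omega)
  have hinv : ∑ x : ZMod p, (x ^ 2)⁻¹ = 0 := by
    simp_rw [← inv_pow]
    exact (Equiv.sum_comp (Equiv.inv (ZMod p)) (· ^ 2)).trans hsq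
  rw [← hinv, ← ZMod.sum_range_natCast (fun x => (x ^ 2)⁻¹), range_eq_Ico,
    sum_eq_sum_Ico_succ_bot (Fact.out : p.Prime).pos]
  simp

theorem Nat.Prime.dvd_sum_prod_erase_mul_sub {p : ℕ} (hp : p.Prime) (hp5 : 5 ≤ p) :
    p ∣ ∑ r ∈ Ico 1 p, ∏ t ∈ (Ico 1 p).erase r, t * (p - t) := by
  have := Fact.mk hp
  rw [← ZMod.natCast_eq_zero_iff]
  calc ((∑ r ∈ Ico 1 p, ∏ t ∈ (Ico 1 p).erase r, t * (p - t) : ℕ) : ZMod p)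
      = ∑ r ∈ Ico 1 p, ∏ t ∈ (Ico 1 p).erase r, -(t : ZMod p) ^ 2 := by
        push_cast
        refine sum_congr rfl fun r _ => prod_congr rfl fun t ht => ?_
        rw [Nat.cast_sub (mem_Ico.1 (mem_of_mem_erase ht)).2.le, ZMod.natCast_self]
        ring
    _ = (∏ t ∈ Ico 1 p, -(t : ZMod p) ^ 2) * ∑ r ∈ Ico 1 p, (-(r : ZMod p) ^ 2)⁻¹ :=
        sum_prod_erase_eq_prod_mul_sum_inv fun t ht =>
          neg_ne_zero.2 (pow_ne_zero 2 (ZMod.natCast_ne_zero_of_mem_Ico ht))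
    _ = 0 := by simp [inv_neg, sum_neg_distrib, ZMod.sum_Ico_inv_sq_eq_zero hp5]

theorem mul_add_mul_add_sub (i p r : ℕ) (hr : r ≤ p) :
    (i * p + r) * (i * p + (p - r)) = r * (p - r) + (i ^ 2 + i) * p ^ 2 := by
  obtain ⟨s, rfl⟩ := Nat.exists_eq_add_of_le hr
  rw [Nat.add_sub_cancel_left]
  ring

theorem prod_Ico_mul_add_mul_self (i p : ℕ) :
    (∏ r ∈ Ico 1 p, (i * p + r)) * ∏ r ∈ Ico 1 p, (i * p + r)
      = ∏ r ∈ Ico 1 p, (r * (p - r) + (i ^ 2 + i) * p ^ 2) := by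
  have hreflect : ∏ r ∈ Ico 1 p, (i * p + (p - r)) = ∏ r ∈ Ico 1 p, (i * p + r) := by
    simpa using prod_Ico_reflect (fun r => i * p + r) 1 (Nat.le_succ p)
  nth_rw 2 [← hreflect]
  rw [← prod_mul_distrib]
  exact prod_congr rfl fun r hr => mul_add_mul_add_sub i p r (mem_Ico.1 hr).2.le

theorem prod_Ico_mul_sub (p : ℕ) : ∏ r ∈ Ico 1 p, r * (p - r) = (p - 1)! * (p - 1)! := by
  rcases p.eq_zero_or_pos with rfl | hp
  · rfl
  have hfac : ∏ r ∈ Ico 1 p, r = (p - 1)! := by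
    simpa [Nat.sub_add_cancel hp] using prod_Ico_id_eq_factorial (p - 1)
  have hreflect : ∏ r ∈ Ico 1 p, (p - r) = (p - 1)! := by
    simpa [hfac] using prod_Ico_reflect (fun r => r) 1 (Nat.le_succ p)
  rw [prod_mul_distrib, hfac, hreflect]

theorem prod_Ico_mul_add_cast_mul_self {p : ℕ} (hp : p.Prime) (hp5 : 5 ≤ p) (i : ℕ) :
    ((∏ r ∈ Ico 1 p, (i * p + r) : ℕ) : ZMod (p ^ 3)) * (∏ r ∈ Ico 1 p, (i * p + r) : ℕ)
      = ((p - 1)! : ZMod (p ^ 3)) * (p - 1)! := by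
  set c : ZMod (p ^ 3) := (((i ^ 2 + i) * p ^ 2 : ℕ) : ZMod (p ^ 3))
  have hc : c * c = 0 := by
    rw [← Nat.cast_mul, ZMod.natCast_eq_zero_iff]
    exact ⟨(i ^ 2 + i) ^ 2 * p, by ring⟩
  obtain ⟨q, hq⟩ := hp.dvd_sum_prod_erase_mul_sub hp5
  have hcT : c * (∑ r ∈ Ico 1 p, ∏ t ∈ (Ico 1 p).erase r, t * (p - t) : ℕ) = 0 := by
    rw [← Nat.cast_mul, ZMod.natCast_eq_zero_iff, hq]
    exact ⟨(i ^ 2 + i) * q, by ring⟩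
  rw [← Nat.cast_mul, prod_Ico_mul_add_mul_self, Nat.cast_prod]
  simp only [Nat.cast_add]
  rw [prod_add_of_mul_self_eq_zero hc, ← Nat.cast_prod, prod_Ico_mul_sub, Nat.cast_mul]
  simp only [← Nat.cast_prod, ← Nat.cast_sum]
  rw [hcT, add_zero]

theorem prod_Ico_mul_add_cast_eq_neg_one {p : ℕ} [Fact p.Prime] (i : ℕ) :
    ((∏ r ∈ Ico 1 p, (i * p + r) : ℕ) : ZMod p) = -1 := by
  simp [ZMod.prod_Ico_one_prime]

theorem prod_Ico_mul_add_cast_eq_factorial {p : ℕ} (hp : p.Prime) (hp5 : 5 ≤ p) (i : ℕ) :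
    ((∏ r ∈ Ico 1 p, (i * p + r) : ℕ) : ZMod (p ^ 3)) = (p - 1)! := by
  have := Fact.mk hp
  set P := ∏ r ∈ Ico 1 p, (i * p + r)
  have hunit : IsUnit ((P + (p - 1)! : ℕ) : ZMod (p ^ 3)) := by
    rw [ZMod.isUnit_natCast_iff_not_dvd_pow hp three_pos, ← ZMod.natCast_eq_zero_iff, Nat.cast_add,
      prod_Ico_mul_add_cast_eq_neg_one, ZMod.wilsons_lemma, ← neg_add, neg_eq_zero,
      one_add_one_eq_two, ← Nat.cast_ofNat, ZMod.natCast_eq_zero_iff]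
    exact fun h => by linarith [Nat.le_of_dvd two_pos h]
  rw [← sub_eq_zero, ← hunit.mul_left_eq_zero]
  push_cast
  linear_combination prod_Ico_mul_add_cast_mul_self hp hp5 i

def factorialCoprimePart (p a : ℕ) : ℕ := ∏ i ∈ range a, ∏ r ∈ Ico 1 p, (i * p + r)

theorem factorial_mul_eq {p : ℕ} (hp : 0 < p) (a : ℕ) :
    (a * p)! = p ^ a * a ! * factorialCoprimePart p a := by
  induction a with
  | zero => simp [factorialCoprimePart]
  | succ a ih =>
    have hblock : (a * p + 1).ascFactorial p = (a + 1) * p * ∏ r ∈ Ico 1 p, (a * p + r) := by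
      obtain ⟨k, rfl⟩ := Nat.exists_eq_add_of_lt hp
      rw [ascFactorial_eq_prod_range, prod_range_succ, prod_Ico_eq_prod_range]
      simp only [Nat.add_sub_cancel]
      ring_nf
    rw [add_one_mul, ← factorial_mul_ascFactorial, ih, hblock, factorialCoprimePart,
      factorialCoprimePart, prod_range_succ, factorial_succ, pow_succ]
    ring

theorem choose_mul_mul_factorialCoprimePart {p n m : ℕ} (hp : 0 < p) (h : m ≤ n) :
    (n * p).choose (m * p) * (factorialCoprimePart p m * factorialCoprimePart p (n - m))
      = n.choose m * factorialCoprimePart p n := by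
  have hK : 0 < p ^ m * m ! * (p ^ (n - m) * (n - m)!) := by positivity
  refine Nat.eq_of_mul_eq_mul_left hK ?_
  calc p ^ m * m ! * (p ^ (n - m) * (n - m)!)
        * ((n * p).choose (m * p) * (factorialCoprimePart p m * factorialCoprimePart p (n - m)))
      = (n * p).choose (m * p) * (m * p)! * ((n - m) * p)! := by
        rw [factorial_mul_eq hp, factorial_mul_eq hp]; ring
    _ = p ^ n * n ! * factorialCoprimePart p n := by
        rw [← factorial_mul_eq hp, Nat.sub_mul,
          choose_mul_factorial_mul_factorial (Nat.mul_le_mul_right p h)]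
    _ = p ^ m * m ! * (p ^ (n - m) * (n - m)!) * (n.choose m * factorialCoprimePart p n) := by
        rw [← choose_mul_factorial_mul_factorial h, ← Nat.add_sub_cancel' h, pow_add,
          Nat.add_sub_cancel_left]
        ring

theorem factorialCoprimePart_cast {p : ℕ} (hp : p.Prime) (hp5 : 5 ≤ p) (a : ℕ) :
    (factorialCoprimePart p a : ZMod (p ^ 3)) = ((p - 1)! : ZMod (p ^ 3)) ^ a := by
  rw [factorialCoprimePart, Nat.cast_prod,
    prod_congr rfl fun i _ => prod_Ico_mul_add_cast_eq_factorial hp hp5 i, prod_const, card_range]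

theorem choose_mul_cast_eq {p : ℕ} (hp : p.Prime) (hp5 : 5 ≤ p) (n m : ℕ) :
    ((n * p).choose (m * p) : ZMod (p ^ 3)) = n.choose m := by
  rcases lt_or_ge n m with h | h
  · rw [choose_eq_zero_of_lt h, choose_eq_zero_of_lt (Nat.mul_lt_mul_of_pos_right h hp.pos)]
  have hunit : IsUnit ((p - 1)! : ZMod (p ^ 3)) :=
    (ZMod.isUnit_natCast_iff_not_dvd_pow hp three_pos).2 fun hdvd => by
      have := (hp.dvd_factorial).1 hdvd; omega
  have hcast :=
    congrArg (Nat.cast : ℕ → ZMod (p ^ 3)) (choose_mul_mul_factorialCoprimePart hp.pos h)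
  push_cast [factorialCoprimePart_cast hp hp5] at hcast
  rw [← pow_add, Nat.add_sub_cancel' h] at hcast
  exact (hunit.pow n).mul_left_inj.1 hcast

theorem choose_mul_pow_cast_eq {p : ℕ} (hp : p.Prime) (hp5 : 5 ≤ p) (n m k : ℕ) :
    ((n * p ^ k).choose (m * p ^ k) : ZMod (p ^ 3)) = n.choose m := by
  induction k with
  | zero => simp
  | succ k ih => rw [pow_succ p k, ← mul_assoc, ← mul_assoc, choose_mul_cast_eq hp hp5, ih]

theorem Nat.Coprime.dvd_choose_s2 {k n i : ℕ} (hki : k.Coprime i) (hkn : k ∣ n) :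
    k ∣ n.choose i := by
  rcases i with _ | j
  · simp [(Nat.coprime_zero_right k).1 hki]
  rcases n with _ | n
  · simp
  refine hki.dvd_of_dvd_mul_right ?_
  rw [← add_one_mul_choose_eq]
  exact hkn.mul_right _

theorem stmt2 (p : ℕ) (hp : p.Prime) (hp5 : 5 ≤ p) (n m n0 m0 : ℕ) (hn0 : n0 < p) (hm0 : m0 < p) :
    (n * p ^ 3 + n0).choose (m * p ^ 3 + m0) ≡ n.choose m * n0.choose m0 [MOD p ^ 3] := by
  rw [← ZMod.natCast_eq_natCast_iff, add_choose_eq, Nat.cast_sum,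
    sum_eq_single_of_mem (m * p ^ 3, m0) (HasAntidiagonal.mem_antidiagonal.2 rfl),
    Nat.cast_mul, Nat.cast_mul, choose_mul_pow_cast_eq hp hp5]
  rintro ⟨i, j⟩ hij hne
  rw [HasAntidiagonal.mem_antidiagonal] at hij
  dsimp only at hij ⊢
  rcases lt_or_ge n0 j with hj | hj
  · simp [choose_eq_zero_of_lt hj]
  have hpi : ¬ p ∣ i := by
    rintro ⟨q, rfl⟩
    have hmod : j % p = m0 % p := by
      rw [← add_mul_mod_self_left j p q, add_comm j, hij,
        ← add_mul_mod_self_left m0 p (m * p ^ 2)]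
      ring_nf
    rw [mod_eq_of_lt (hj.trans_lt hn0), mod_eq_of_lt hm0] at hmod
    exact hne (Prod.ext (by dsimp only; omega) hmod)
  have hdvd : p ^ 3 ∣ (n * p ^ 3).choose i :=
    (Nat.Coprime.pow_left 3 (hp.coprime_iff_not_dvd.2 hpi)).dvd_choose_s2 (dvd_mul_left _ _)
  rw [Nat.cast_mul, (ZMod.natCast_eq_zero_iff _ _).2 hdvd, zero_mul]
end

section
/- For every prime p ≥ 5 and nonnegative integers n ≥ m and integers k ≥ 1 and i with 1 ≤ i ≤ k, the binomial coefficient C(n·p^k, m·p^k) is congruent to C(n·p^(k−i), m·p^(k−i)) modulo p^(3(k−i+1)). -/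
/-!
Let `W(N)` be the product of the integers in `(0, N]` prime to `p`. Then `(xp)! = p^x x! W(xp)`, so
`C(ap, bp) W(bp) W(cp) = C(a, b) W(ap)` with `c = a - b`, and `W(ap) = W(bp) ∏ (bp + r)` over the
`r ∈ (0, cp]` prime to `p`. The step `a ↦ ap` therefore reduces to `∏ (x + r) ≡ ∏ r` modulo
`p^(3(j+1))` when `p^(j+1)` divides `x` and `M`. Pairing `r` with `M - r` gives
`(x + r)(x + M - r) = r(M - r) + D` with `p^(2(j+1)) ∣ D = x(x + M)`, so the squares of the two
products differ by `D ∑_r ∏_{t ≠ r} t(M - t)`, and modulo `p^(j+1)` that sum is `-W(M)² ∑ r⁻²`.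
The inverses `r⁻¹` run (`M / p^(j+1)` times) over the units of `ℤ/p^(j+1)`, and the sum of their
squares vanishes because scaling by `2` multiplies it by `4` and `3` is a unit for `p ≥ 5`. The
products agree modulo the odd prime `p`, so the congruence of their squares lifts to them. Iterating
the step from `j = k - i` to `k` gives the theorem.
-/

open Finset
open scoped Nat

namespace Jacobsthal

lemma prod_add_of_mul_self_eq_zero {ι R : Type*} [DecidableEq ι] [CommSemiring R] (s : Finset ι)
    (f : ι → R) {d : R} (hd : d * d = 0) :
    ∏ i ∈ s, (f i + d) = ∏ i ∈ s, f i + d * ∑ i ∈ s, ∏ j ∈ s.erase i, f j := by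
  induction s using Finset.induction with
  | empty => simp
  | @insert a s ha ih =>
    have herase : ∑ i ∈ s, ∏ j ∈ (insert a s).erase i, f j =
        f a * ∑ i ∈ s, ∏ j ∈ s.erase i, f j := by
      rw [mul_sum]
      refine sum_congr rfl fun i hi => ?_
      rw [erase_insert_of_ne (ne_of_mem_of_not_mem hi ha).symm,
        prod_insert fun h => ha (mem_of_mem_erase h)]
    rw [prod_insert ha, ih, prod_insert ha, sum_insert ha, erase_insert ha, herase]
    calc (f a + d) * (∏ i ∈ s, f i + d * ∑ i ∈ s, ∏ j ∈ s.erase i, f j)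
        = f a * ∏ i ∈ s, f i + d * (∏ i ∈ s, f i + f a * ∑ i ∈ s, ∏ j ∈ s.erase i, f j)
          + d * d * ∑ i ∈ s, ∏ j ∈ s.erase i, f j := by ring
      _ = _ := by rw [hd, zero_mul, add_zero]

lemma sum_units_sq_eq_zero {R : Type*} [CommRing R] [Fintype Rˣ] (h2 : IsUnit (2 : R))
    (h3 : IsUnit (3 : R)) : ∑ u : Rˣ, (u : R) ^ 2 = 0 := by
  have h := Fintype.sum_equiv (Equiv.mulLeft h2.unit) (fun u => ((h2.unit * u : Rˣ) : R) ^ 2)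
    (fun u => (u : R) ^ 2) fun _ => rfl
  simp only [Units.val_mul, IsUnit.unit_spec, mul_pow, ← mul_sum] at h
  exact h3.mul_left_cancel (by linear_combination h)

lemma modEq_of_sq_modEq {p k x y : ℕ} (hp : p.Prime) (hp2 : p ≠ 2) (hxy : x ≡ y [MOD p])
    (hy : y.Coprime p) (hsq : x ^ 2 ≡ y ^ 2 [MOD p ^ k]) : x ≡ y [MOD p ^ k] := by
  have hsum : (p ^ k).Coprime (x + y) := by
    refine Nat.Coprime.pow_left k (hp.coprime_iff_not_dvd.2 fun h => ?_)
    have h2y : p ∣ 2 * y := by rwa [two_mul, ← (hxy.add_right y).dvd_iff dvd_rfl]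
    rcases hp.dvd_mul.1 h2y with h | h
    · exact hp2 ((Nat.prime_dvd_prime_iff_eq hp Nat.prime_two).1 h)
    · exact hp.coprime_iff_not_dvd.1 hy.symm h
  rw [Nat.modEq_iff_dvd] at hsq ⊢
  have hprod : ((p ^ k : ℕ) : ℤ) ∣ ((x + y : ℕ) : ℤ) * ((y : ℤ) - x) := by
    convert hsq using 1; push_cast; ring
  exact (Nat.isCoprime_iff_coprime.2 hsum).dvd_of_dvd_mul_left hprod

def coprimeIoc (p N : ℕ) : Finset ℕ := (Ioc 0 N).filter fun r => ¬ p ∣ r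

variable {p : ℕ}

lemma mem_coprimeIoc {N r : ℕ} : r ∈ coprimeIoc p N ↔ 0 < r ∧ r ≤ N ∧ ¬ p ∣ r := by
  simp [coprimeIoc, and_assoc]

lemma coprime_prod_coprimeIoc (hp : p.Prime) (N : ℕ) : (∏ r ∈ coprimeIoc p N, r).Coprime p :=
  Nat.Coprime.prod_left fun _ hr => (hp.coprime_iff_not_dvd.2 (mem_coprimeIoc.1 hr).2.2).symm

lemma coprimeIoc_add {M : ℕ} (hM : p ∣ M) (N : ℕ) :
    coprimeIoc p (M + N) = coprimeIoc p M ∪ (coprimeIoc p N).map (addLeftEmbedding M) := by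
  ext r
  simp only [mem_union, mem_map, mem_coprimeIoc, addLeftEmbedding_apply]
  constructor
  · rintro ⟨h0, hle, hpr⟩
    by_cases hrM : r ≤ M
    · exact Or.inl ⟨h0, hrM, hpr⟩
    · refine Or.inr ⟨r - M, ⟨by omega, by omega, fun h => hpr ?_⟩, by omega⟩
      simpa [Nat.add_sub_cancel' (le_of_not_ge hrM)] using Nat.dvd_add hM h
  · rintro (⟨h0, hle, hpr⟩ | ⟨t, ⟨h0, hle, hpt⟩, rfl⟩)
    · exact ⟨h0, by omega, hpr⟩
    · exact ⟨by omega, by omega, fun h => hpt ((Nat.dvd_add_right hM).1 h)⟩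

@[to_additive]
lemma prod_coprimeIoc_add {β : Type*} [CommMonoid β] {M : ℕ} (hM : p ∣ M) (N : ℕ) (f : ℕ → β) :
    ∏ r ∈ coprimeIoc p (M + N), f r =
      (∏ r ∈ coprimeIoc p M, f r) * ∏ r ∈ coprimeIoc p N, f (M + r) := by
  rw [coprimeIoc_add hM, prod_union, prod_map]
  · rfl
  · simp only [disjoint_left, mem_map, mem_coprimeIoc, addLeftEmbedding_apply]
    omega

lemma sum_coprimeIoc_mul_of_periodic {β : Type*} [AddCommMonoid β] {Q : ℕ} (hQ : p ∣ Q)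
    {F : ℕ → β} (hF : Function.Periodic F Q) (e : ℕ) :
    ∑ r ∈ coprimeIoc p (e * Q), F r = e • ∑ r ∈ coprimeIoc p Q, F r := by
  induction e with
  | zero => simp [coprimeIoc]
  | succ e ih =>
    rw [add_mul, one_mul, sum_coprimeIoc_add (dvd_mul_of_dvd_right hQ e), ih, succ_nsmul]
    congr 1
    exact sum_congr rfl fun r _ => by rw [add_comm]; exact hF.nat_mul e r

lemma prod_coprimeIoc_sq {β : Type*} [CommMonoid β] {M : ℕ} (hM : p ∣ M) (f : ℕ → β) :
    (∏ r ∈ coprimeIoc p M, f r) ^ 2 = ∏ r ∈ coprimeIoc p M, f r * f (M - r) := by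
  have hmem : ∀ r ∈ coprimeIoc p M, M - r ∈ coprimeIoc p M := by
    intro r hr
    obtain ⟨h0, hle, hpr⟩ := mem_coprimeIoc.1 hr
    have hrM : r ≠ M := fun h => hpr (h ▸ hM)
    refine mem_coprimeIoc.2 ⟨by omega, by omega, fun h => hpr ?_⟩
    simpa [Nat.sub_sub_self hle] using Nat.dvd_sub hM h
  have hreflect : ∏ r ∈ coprimeIoc p M, f (M - r) = ∏ r ∈ coprimeIoc p M, f r := by
    refine prod_nbij' (M - ·) (M - ·) hmem hmem (fun r hr => ?_) (fun r hr => ?_) fun _ _ => rfl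
    all_goals exact Nat.sub_sub_self (mem_coprimeIoc.1 hr).2.1
  rw [sq, prod_mul_distrib]
  nth_rw 2 [← hreflect]

lemma prod_Ioc_zero_eq_factorial (n : ℕ) : ∏ r ∈ Ioc 0 n, r = n ! := by
  rw [← Ico_add_one_add_one_eq_Ioc, zero_add, prod_Ico_id_eq_factorial]

lemma factorial_mul_eq (hp : 0 < p) (x : ℕ) :
    (x * p)! = p ^ x * x ! * ∏ r ∈ coprimeIoc p (x * p), r := by
  have hmul : (Ioc 0 (x * p)).filter (p ∣ ·) = (Ioc 0 x).image (· * p) := by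
    ext r
    simp only [mem_filter, mem_Ioc, mem_image]
    constructor
    · rintro ⟨⟨h0, hle⟩, s, rfl⟩
      refine ⟨s, ⟨Nat.pos_of_mul_pos_left h0, ?_⟩, mul_comm s p⟩
      exact Nat.le_of_mul_le_mul_right (by rwa [mul_comm] at hle) hp
    · rintro ⟨s, ⟨h0, hle⟩, rfl⟩
      exact ⟨⟨Nat.mul_pos h0 hp, Nat.mul_le_mul_right p hle⟩, dvd_mul_left p s⟩
  rw [← prod_Ioc_zero_eq_factorial, ← prod_filter_mul_prod_filter_not _ (p ∣ ·), hmul,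
    prod_image fun a _ b _ h => Nat.eq_of_mul_eq_mul_right hp h, prod_mul_distrib, prod_const,
    Nat.card_Ioc, Nat.sub_zero, prod_Ioc_zero_eq_factorial, coprimeIoc]
  ring

lemma choose_mul_mul_prod_coprimeIoc (hp : 0 < p) {a b : ℕ} (hba : b ≤ a) :
    (a * p).choose (b * p) *
        ((∏ r ∈ coprimeIoc p (b * p), r) * ∏ r ∈ coprimeIoc p ((a - b) * p), r) =
      a.choose b * ∏ r ∈ coprimeIoc p (a * p), r := by
  have hpos : 0 < p ^ a * (b ! * (a - b)!) := by positivity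
  refine Nat.eq_of_mul_eq_mul_right hpos ?_
  have hchoose := Nat.choose_mul_factorial_mul_factorial (Nat.mul_le_mul_right p hba)
  rw [← Nat.sub_mul, factorial_mul_eq hp, factorial_mul_eq hp, factorial_mul_eq hp] at hchoose
  have hpow : p ^ a = p ^ b * p ^ (a - b) := by rw [← pow_add, Nat.add_sub_cancel' hba]
  calc _ = (a * p).choose (b * p) * (p ^ b * b ! * ∏ r ∈ coprimeIoc p (b * p), r) *
          (p ^ (a - b) * (a - b)! * ∏ r ∈ coprimeIoc p ((a - b) * p), r) := by rw [hpow]; ring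
    _ = p ^ a * (a.choose b * b ! * (a - b)!) * ∏ r ∈ coprimeIoc p (a * p), r := by
          rw [hchoose, Nat.choose_mul_factorial_mul_factorial hba]
    _ = _ := by ring

lemma isUnit_natCast_zmod_pow {q : ℕ} (hp : p.Prime) (hq : q.Prime) (hqp : q ≠ p) (k : ℕ) :
    IsUnit (q : ZMod (p ^ k)) :=
  (ZMod.isUnit_iff_coprime q _).2 (((Nat.coprime_primes hq hp).2 hqp).pow_right k)

lemma sum_coprimeIoc_eq_sum_units {β : Type*} [AddCommMonoid β] [hp : Fact p.Prime] (j : ℕ)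
    (f : ZMod (p ^ (j + 1)) → β) :
    ∑ r ∈ coprimeIoc p (p ^ (j + 1)), f r = ∑ u : (ZMod (p ^ (j + 1)))ˣ, f u := by
  have hcop : ∀ r ∈ coprimeIoc p (p ^ (j + 1)), r.Coprime (p ^ (j + 1)) := fun r hr =>
    ((hp.out.coprime_iff_not_dvd.2 (mem_coprimeIoc.1 hr).2.2).symm).pow_right _
  have : Fact (1 < p ^ (j + 1)) := ⟨Nat.one_lt_pow j.succ_ne_zero hp.out.one_lt⟩
  refine sum_bij' (fun r hr => ZMod.unitOfCoprime r (hcop r hr))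
    (fun u _ => (u : ZMod (p ^ (j + 1))).val)
    (fun _ _ => mem_univ _) (fun u _ => ?_) (fun r hr => ?_) (fun u _ => ?_) fun _ _ => rfl
  · have hval := ZMod.val_coe_unit_coprime u
    refine mem_coprimeIoc.2 ⟨Nat.pos_of_ne_zero fun h => ?_, (ZMod.val_lt _).le, fun h => ?_⟩
    · rw [h, Nat.coprime_zero_left] at hval
      exact (Fact.out : 1 < p ^ (j + 1)).ne' hval
    · exact hp.out.one_lt.ne'
        (Nat.eq_one_of_dvd_coprimes hval h (dvd_pow_self p j.succ_ne_zero))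
  · obtain ⟨-, hle, hpr⟩ := mem_coprimeIoc.1 hr
    have hlt : r < p ^ (j + 1) :=
      lt_of_le_of_ne hle fun h => hpr (h ▸ dvd_pow_self p j.succ_ne_zero)
    simp only [ZMod.coe_unitOfCoprime, ZMod.val_cast_of_lt hlt]
  · exact Units.ext (by simp only [ZMod.coe_unitOfCoprime, ZMod.natCast_zmod_val])

lemma sum_inv_sq_coprimeIoc_eq_zero (hp : p.Prime) (hp5 : 5 ≤ p) {j M : ℕ}
    (hM : p ^ (j + 1) ∣ M) : ∑ r ∈ coprimeIoc p M, ((r : ZMod (p ^ (j + 1)))⁻¹) ^ 2 = 0 := by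
  have : Fact p.Prime := ⟨hp⟩
  obtain ⟨e, rfl⟩ := hM
  have hperiodic :
      Function.Periodic (fun r : ℕ => ((r : ZMod (p ^ (j + 1)))⁻¹) ^ 2) (p ^ (j + 1)) := fun r => by
    simp only [Nat.cast_add, ZMod.natCast_self, add_zero]
  have h2 : IsUnit (2 : ZMod (p ^ (j + 1))) := by
    exact_mod_cast isUnit_natCast_zmod_pow hp Nat.prime_two (by omega) _
  have h3 : IsUnit (3 : ZMod (p ^ (j + 1))) := by
    exact_mod_cast isUnit_natCast_zmod_pow hp Nat.prime_three (by omega) _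
  rw [mul_comm, sum_coprimeIoc_mul_of_periodic (dvd_pow_self p j.succ_ne_zero) hperiodic,
    sum_coprimeIoc_eq_sum_units j (fun x => (x⁻¹) ^ 2)]
  have hinv := Equiv.sum_comp (Equiv.inv _) fun u : (ZMod (p ^ (j + 1)))ˣ =>
    (u : ZMod (p ^ (j + 1))) ^ 2
  simp only [Equiv.inv_apply] at hinv
  simp only [ZMod.inv_coe_unit, hinv, sum_units_sq_eq_zero h2 h3, smul_zero]

lemma pow_dvd_sum_prod_erase_mul_sub (hp : p.Prime) (hp5 : 5 ≤ p) {j M : ℕ}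
    (hM : p ^ (j + 1) ∣ M) :
    p ^ (j + 1) ∣ ∑ r ∈ coprimeIoc p M, ∏ t ∈ (coprimeIoc p M).erase r, t * (M - t) := by
  set S := coprimeIoc p M
  rw [← ZMod.natCast_eq_zero_iff, Nat.cast_sum]
  have hneg : ∀ t ∈ S, ((t * (M - t) : ℕ) : ZMod (p ^ (j + 1))) = -(t : ZMod _) ^ 2 := by
    intro t ht
    rw [Nat.cast_mul, Nat.cast_sub (mem_coprimeIoc.1 ht).2.1,
      (ZMod.natCast_eq_zero_iff M _).2 hM]
    ring
  have hterm : ∀ r ∈ S, ((∏ t ∈ S.erase r, t * (M - t) : ℕ) : ZMod (p ^ (j + 1))) =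
      (∏ t ∈ S, -(t : ZMod _) ^ 2) * -((r : ZMod _)⁻¹) ^ 2 := by
    intro r hr
    have hunit : (r : ZMod (p ^ (j + 1))) * (r : ZMod (p ^ (j + 1)))⁻¹ = 1 :=
      ZMod.mul_inv_of_unit _ ((ZMod.isUnit_iff_coprime r _).2
        ((hp.coprime_iff_not_dvd.2 (mem_coprimeIoc.1 hr).2.2).symm.pow_right _))
    rw [Nat.cast_prod, prod_congr rfl fun t ht => hneg t (mem_of_mem_erase ht),
      ← mul_prod_erase S _ hr]
    linear_combination -(∏ t ∈ S.erase r, -(t : ZMod (p ^ (j + 1))) ^ 2) *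
      (1 + (r : ZMod (p ^ (j + 1))) * (r : ZMod (p ^ (j + 1)))⁻¹) * hunit
  rw [sum_congr rfl hterm, ← mul_sum, sum_neg_distrib, sum_inv_sq_coprimeIoc_eq_zero hp hp5 hM,
    neg_zero, mul_zero]

lemma prod_mul_sub_add_modEq (hp : p.Prime) (hp5 : 5 ≤ p) {j M D : ℕ} (hM : p ^ (j + 1) ∣ M)
    (hD : p ^ (2 * (j + 1)) ∣ D) :
    ∏ r ∈ coprimeIoc p M, (r * (M - r) + D) ≡ ∏ r ∈ coprimeIoc p M, r * (M - r)
      [MOD p ^ (3 * (j + 1))] := by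
  have hDD : (D : ZMod (p ^ (3 * (j + 1)))) * D = 0 := by
    rw [← Nat.cast_mul, ZMod.natCast_eq_zero_iff]
    exact (pow_dvd_pow p (by omega : 3 * (j + 1) ≤ 2 * (j + 1) + 2 * (j + 1))).trans
      (pow_add p _ _ ▸ mul_dvd_mul hD hD)
  have hDN : (D : ZMod (p ^ (3 * (j + 1)))) *
      ((∑ r ∈ coprimeIoc p M, ∏ t ∈ (coprimeIoc p M).erase r, t * (M - t) : ℕ) : ZMod _) =
        0 := by
    rw [← Nat.cast_mul, ZMod.natCast_eq_zero_iff]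
    refine (pow_dvd_pow p (by omega : 3 * (j + 1) ≤ 2 * (j + 1) + (j + 1))).trans
      (pow_add p _ _ ▸ mul_dvd_mul hD ?_)
    exact pow_dvd_sum_prod_erase_mul_sub hp hp5 hM
  rw [← ZMod.natCast_eq_natCast_iff]
  simp only [Nat.cast_sum, Nat.cast_prod, Nat.cast_add] at hDN ⊢
  rw [prod_add_of_mul_self_eq_zero _ _ hDD, hDN, add_zero]

lemma prod_coprimeIoc_add_modEq (hp : p.Prime) (hp5 : 5 ≤ p) {j x M : ℕ}
    (hx : p ^ (j + 1) ∣ x) (hM : p ^ (j + 1) ∣ M) :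
    ∏ r ∈ coprimeIoc p M, (x + r) ≡ ∏ r ∈ coprimeIoc p M, r [MOD p ^ (3 * (j + 1))] := by
  have hpM : p ∣ M := (dvd_pow_self p j.succ_ne_zero).trans hM
  have hpx : p ∣ x := (dvd_pow_self p j.succ_ne_zero).trans hx
  refine modEq_of_sq_modEq hp (by omega) ?_ (coprime_prod_coprimeIoc hp M) ?_
  · exact Nat.ModEq.prod fun r _ => by
      simpa using (Nat.modEq_zero_iff_dvd.2 hpx).add_right r
  · have hpair : ∀ r ∈ coprimeIoc p M,
        (x + r) * (x + (M - r)) = r * (M - r) + x * (x + M) := by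
      intro r hr
      obtain ⟨s, rfl⟩ := Nat.exists_eq_add_of_le (mem_coprimeIoc.1 hr).2.1
      rw [Nat.add_sub_cancel_left]
      ring
    have hD : p ^ (2 * (j + 1)) ∣ x * (x + M) := by
      rw [two_mul, pow_add]
      exact mul_dvd_mul hx (Nat.dvd_add hx hM)
    rw [prod_coprimeIoc_sq hpM, prod_coprimeIoc_sq hpM, prod_congr rfl hpair]
    exact prod_mul_sub_add_modEq hp hp5 hM hD

theorem choose_mul_modEq (hp : p.Prime) (hp5 : 5 ≤ p) {j a b : ℕ} (hba : b ≤ a)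
    (ha : p ^ j ∣ a) (hb : p ^ j ∣ b) :
    (a * p).choose (b * p) ≡ a.choose b [MOD p ^ (3 * (j + 1))] := by
  have hsplit : ∏ r ∈ coprimeIoc p (a * p), r =
      (∏ r ∈ coprimeIoc p (b * p), r) * ∏ r ∈ coprimeIoc p ((a - b) * p), (b * p + r) := by
    rw [← prod_coprimeIoc_add (dvd_mul_left p b), ← add_mul, Nat.add_sub_cancel' hba]
  have hshift := prod_coprimeIoc_add_modEq hp hp5
    (pow_succ p j ▸ mul_dvd_mul_right hb p)
    (pow_succ p j ▸ mul_dvd_mul_right (Nat.dvd_sub ha hb) p)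
  have hcop : ((∏ r ∈ coprimeIoc p (b * p), r) *
      ∏ r ∈ coprimeIoc p ((a - b) * p), r).Coprime (p ^ (3 * (j + 1))) :=
    ((coprime_prod_coprimeIoc hp _).mul_left (coprime_prod_coprimeIoc hp _)).pow_right _
  refine Nat.ModEq.cancel_right_of_coprime hcop.symm ?_
  rw [choose_mul_mul_prod_coprimeIoc hp.pos hba, hsplit]
  exact (hshift.mul_left _).mul_left _

theorem choose_mul_pow_add_modEq (hp : p.Prime) (hp5 : 5 ≤ p) {m n : ℕ} (hmn : m ≤ n)
    (j i : ℕ) :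
    (n * p ^ (j + i)).choose (m * p ^ (j + i)) ≡ (n * p ^ j).choose (m * p ^ j)
      [MOD p ^ (3 * (j + 1))] := by
  induction i with
  | zero => rfl
  | succ i ih =>
    have hstep := choose_mul_modEq hp hp5 (Nat.mul_le_mul_right (p ^ (j + i)) hmn)
      (dvd_mul_left _ n) (dvd_mul_left _ m)
    rw [mul_assoc, mul_assoc, ← pow_succ] at hstep
    exact (hstep.of_dvd (pow_dvd_pow p (by omega))).trans ih

end Jacobsthal

theorem stmt4_general (p : ℕ) (hp : p.Prime) (hp5 : 5 ≤ p) (n m k i : ℕ) (hmn : m ≤ n)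
    (hik : i ≤ k) :
    (n * p ^ k).choose (m * p ^ k) ≡ (n * p ^ (k - i)).choose (m * p ^ (k - i))
      [MOD p ^ (3 * (k - i + 1))] := by
  simpa only [Nat.sub_add_cancel hik] using
    Jacobsthal.choose_mul_pow_add_modEq hp hp5 hmn (k - i) i

theorem stmt4 (p : ℕ) (hp : p.Prime) (hp5 : 5 ≤ p) (n m k i : ℕ) (hmn : m ≤ n)
    (hk : 1 ≤ k) (hi1 : 1 ≤ i) (hik : i ≤ k) :
    (n * p ^ k).choose (m * p ^ k) ≡ (n * p ^ (k - i)).choose (m * p ^ (k - i))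
      [MOD p ^ (3 * (k - i + 1))] :=
  stmt4_general p hp hp5 n m k i hmn hik
end

section
/- For every prime p ≥ 5 and nonnegative integers n ≥ m and k ≥ 1, the binomial coefficient C(n·p^k, m·p^k) is congruent to C(n·p^⌊(k−1)/3⌋, m·p^⌊(k−1)/3⌋) modulo p^k. -/
/-!
Write `n = m + c`, `A = c p^(j+1)`, `N = m p^(j+1)`, and let `I` be the integers in `[0, N)`
prime to `p`. Sorting the factors of `(A + 1)(A + 2)⋯(A + N)` into multiples of `p` and the rest
gives `C(n p^(j+1), m p^(j+1)) · ∏_{i ∈ I} i = C(n p^j, m p^j) · ∏_{i ∈ I} (A + i)`.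
Modulo `p^(3(j+1))` we have `A³ = 0`, so `∏ (1 + A/i) = 1 + A e₁ + A² e₂` with
`2 e₂ = e₁² - ∑ 1/i²`. Since multiplication by `2` permutes the units mod `p^(j+1)` and
`p ∤ 2² - 1`, `∑ 1/i² ≡ 0 (mod p^(j+1))`; pairing `i` with `N - i` upgrades this to
`e₁ ≡ 0 (mod p^(2(j+1)))`. So the two products agree, and
`C(n p^(j+1), m p^(j+1)) ≡ C(n p^j, m p^j) (mod p^(3(j+1)))`. Going up from `j = ⌊(k-1)/3⌋`
to `k`, every one of these moduli is divisible by `p^k`.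
-/

open Finset
open scoped Nat

section CommRing

variable {R ι : Type*} [CommRing R]

theorem two_mul_prod_one_add_mul (s : Finset ι) (u : ι → R) {a : R} (ha : a ^ 3 = 0) :
    2 * ∏ i ∈ s, (1 + a * u i) =
      2 + 2 * a * ∑ i ∈ s, u i + a ^ 2 * ((∑ i ∈ s, u i) ^ 2 - ∑ i ∈ s, u i ^ 2) := by
  classical
  induction s using Finset.induction_on with
  | empty => simp
  | insert x s hx ih =>
    rw [prod_insert hx, sum_insert hx, sum_insert hx]
    linear_combination
      (1 + a * u x) * ih + u x * ((∑ i ∈ s, u i) ^ 2 - ∑ i ∈ s, u i ^ 2) * ha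

theorem prod_one_add_mul_eq_one (s : Finset ι) (u : ι → R) {a : R} (h2 : IsUnit (2 : R))
    (ha : a ^ 3 = 0) (hsum : a * ∑ i ∈ s, u i = 0) (hsq : a ^ 2 * ∑ i ∈ s, u i ^ 2 = 0) :
    ∏ i ∈ s, (1 + a * u i) = 1 := by
  refine h2.mul_left_cancel ?_
  linear_combination two_mul_prod_one_add_mul s u ha + (2 + a * ∑ i ∈ s, u i) * hsum - hsq

theorem sum_units_pow_eq_zero [Fintype Rˣ] {c : Rˣ} {k : ℕ} (hc : IsUnit ((c : R) ^ k - 1)) :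
    ∑ u : Rˣ, (u : R) ^ k = 0 := by
  have h := Equiv.sum_comp (Equiv.mulLeft c) fun u : Rˣ => (u : R) ^ k
  simp only [Equiv.coe_mulLeft, Units.val_mul, mul_pow, ← mul_sum] at h
  exact hc.mul_right_eq_zero.mp (by linear_combination h)

end CommRing

theorem sum_ite_isUnit_eq_sum_units {R M : Type*} [Monoid R] [AddCommMonoid M] [Fintype R]
    [Fintype Rˣ] [DecidablePred (IsUnit : R → Prop)] (g : R → M) :
    ∑ x, (if IsUnit x then g x else 0) = ∑ u : Rˣ, g u := by
  rw [← sum_filter]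
  symm
  refine sum_bij (fun u _ => (u : R)) (by simp) (fun _ _ _ _ h => Units.ext h) ?_ fun _ _ => rfl
  intro x hx
  exact ⟨(mem_filter.mp hx).2.unit, mem_univ _, rfl⟩

namespace ZMod

theorem sum_range_mul {M : Type*} [AddCommMonoid M] (q m : ℕ) [NeZero q] (f : ZMod q → M) :
    ∑ i ∈ range (m * q), f i = m • ∑ x, f x := by
  have hblock : ∑ i ∈ range q, f i = ∑ x, f x :=
    sum_nbij' (fun i => (i : ZMod q)) val (by simp) (fun x _ => by simp [val_lt])
      (fun i hi => val_cast_of_lt (mem_range.mp hi)) (fun x _ => by simp) fun _ _ => rfl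
  induction m with
  | zero => simp
  | succ m ih =>
    rw [add_mul, one_mul, sum_range_add, ih, succ_nsmul, ← hblock]
    simp

theorem neg_inv {n : ℕ} {x : ZMod n} (hx : IsUnit x) : (-x)⁻¹ = -x⁻¹ :=
  ZMod.inv_eq_of_mul_eq_one _ _ _ (by rw [neg_mul_neg, mul_inv_of_unit _ hx])

theorem castHom_inv {m n : ℕ} (h : m ∣ n) {x : ZMod n} (hx : IsUnit x) :
    castHom h (ZMod m) x⁻¹ = (castHom h (ZMod m) x)⁻¹ :=
  (ZMod.inv_eq_of_mul_eq_one _ _ _ (by rw [← map_mul, mul_inv_of_unit _ hx, map_one])).symm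

theorem castHom_inv_natCast {m n : ℕ} (h : m ∣ n) {i : ℕ} (hi : IsUnit (i : ZMod n)) :
    castHom h (ZMod m) (i : ZMod n)⁻¹ = (i : ZMod m)⁻¹ := by
  rw [castHom_inv h hi, map_natCast]

theorem natCast_mul_eq_zero_of_castHom_eq_zero {d e N : ℕ} (hN : d * e = N) {x : ZMod N}
    (hx : castHom (Dvd.intro e hN) (ZMod d) x = 0) : (e : ZMod N) * x = 0 := by
  rw [← intCast_zmod_cast x, map_intCast, intCast_zmod_eq_zero_iff_dvd] at hx
  obtain ⟨t, ht⟩ := hx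
  rw [← intCast_zmod_cast x, ht, ← Int.cast_natCast e, ← Int.cast_mul,
    intCast_zmod_eq_zero_iff_dvd, ← hN]
  exact ⟨t, by push_cast; ring⟩

theorem isUnit_two_of_prime_pow {p e : ℕ} (hp : p.Prime) (h2 : 2 < p) :
    IsUnit (2 : ZMod (p ^ e)) := by
  have h := (isUnit_iff_coprime 2 (p ^ e)).mpr
    (((Nat.coprime_primes Nat.prime_two hp).mpr h2.ne).pow_right e)
  exact_mod_cast h

end ZMod

def coprimeRange (p N : ℕ) : Finset ℕ := {i ∈ range N | ¬p ∣ i}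

section coprimeRange

variable {p N i : ℕ}

@[simp] theorem mem_coprimeRange : i ∈ coprimeRange p N ↔ i < N ∧ ¬p ∣ i := by
  simp [coprimeRange]

theorem pos_of_mem_coprimeRange (hi : i ∈ coprimeRange p N) : 0 < i :=
  Nat.pos_of_ne_zero fun h => (mem_coprimeRange.mp hi).2 (h ▸ dvd_zero p)

theorem isUnit_natCast_of_mem_coprimeRange (hp : p.Prime) {e : ℕ} (he : 0 < e)
    (hi : i ∈ coprimeRange p N) : IsUnit (i : ZMod (p ^ e)) :=
  (ZMod.isUnit_natCast_iff_not_dvd_pow hp he).mpr (mem_coprimeRange.mp hi).2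

theorem sub_mem_coprimeRange (hN : p ∣ N) (hi : i ∈ coprimeRange p N) :
    N - i ∈ coprimeRange p N := by
  have hi0 := pos_of_mem_coprimeRange hi
  rw [mem_coprimeRange] at hi ⊢
  refine ⟨by omega, fun h => hi.2 ?_⟩
  simpa [Nat.sub_sub_self hi.1.le] using Nat.dvd_sub hN h

theorem sum_coprimeRange_reflect {M : Type*} [AddCommMonoid M] (hN : p ∣ N) (f : ℕ → M) :
    ∑ i ∈ coprimeRange p N, f (N - i) = ∑ i ∈ coprimeRange p N, f i := by
  have hinv (i : ℕ) (hi : i ∈ coprimeRange p N) : N - (N - i) = i :=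
    Nat.sub_sub_self (mem_coprimeRange.mp hi).1.le
  exact sum_nbij' (N - ·) (N - ·) (fun _ => sub_mem_coprimeRange hN)
    (fun _ => sub_mem_coprimeRange hN) hinv hinv fun _ _ => rfl

theorem prod_coprimeRange_add {M : Type*} [CommMonoid M] (hN : p ∣ N) (L : ℕ) (f : ℕ → M) :
    ∏ i ∈ coprimeRange p (N + L), f i =
      (∏ i ∈ coprimeRange p N, f i) * ∏ i ∈ coprimeRange p L, f (N + i) := by
  simp only [coprimeRange, prod_filter, prod_range_add, Nat.dvd_add_right hN]

end coprimeRange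

theorem sum_coprimeRange_inv_pow_eq_zero {p j c k : ℕ} (hp : p.Prime) (hj : 0 < j) (m : ℕ)
    (hc : ¬p ∣ c) (hck : ¬p ∣ c ^ k - 1) :
    ∑ i ∈ coprimeRange p (m * p ^ j), (i : ZMod (p ^ j))⁻¹ ^ k = 0 := by
  have : NeZero (p ^ j) := ⟨pow_ne_zero j hp.ne_zero⟩
  have hunit (a : ℕ) : IsUnit (a : ZMod (p ^ j)) ↔ ¬p ∣ a :=
    ZMod.isUnit_natCast_iff_not_dvd_pow hp hj
  have hck' : IsUnit ((c : ZMod (p ^ j)) ^ k - 1) := by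
    have h1 : 1 ≤ c ^ k := Nat.one_le_pow _ _ (Nat.pos_of_ne_zero fun h => hc (h ▸ dvd_zero p))
    simpa [Nat.cast_sub h1] using (hunit _).mpr hck
  classical
  rw [coprimeRange, sum_filter]
  simp_rw [← hunit]
  rw [ZMod.sum_range_mul (f := fun x => if IsUnit x then x⁻¹ ^ k else 0),
    sum_ite_isUnit_eq_sum_units]
  simp_rw [ZMod.inv_coe_unit]
  rw [Fintype.sum_equiv (Equiv.inv (ZMod (p ^ j))ˣ)
      (fun u => ((u⁻¹ : (ZMod (p ^ j))ˣ) : ZMod (p ^ j)) ^ k) (fun u => (u : ZMod (p ^ j)) ^ k)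
      fun _ => rfl,
    sum_units_pow_eq_zero (c := ((hunit c).mpr hc).unit) hck', smul_zero]

theorem two_mul_sum_coprimeRange_inv {p N n : ℕ} (hN : p ∣ N)
    (hunit : ∀ i ∈ coprimeRange p N, IsUnit (i : ZMod n)) :
    2 * ∑ i ∈ coprimeRange p N, (i : ZMod n)⁻¹ =
      N * ∑ i ∈ coprimeRange p N, (i : ZMod n)⁻¹ * ((N - i : ℕ) : ZMod n)⁻¹ := by
  rw [two_mul]
  nth_rw 2 [← sum_coprimeRange_reflect hN]
  rw [← sum_add_distrib, mul_sum]
  refine sum_congr rfl fun i hi => ?_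
  have hsum : (i : ZMod n) + ((N - i : ℕ) : ZMod n) = N := by
    rw [← Nat.cast_add, Nat.add_sub_cancel' (mem_coprimeRange.mp hi).1.le]
  rw [← hsum]
  linear_combination -((N - i : ℕ) : ZMod n)⁻¹ * ZMod.mul_inv_of_unit _ (hunit i hi) -
    (i : ZMod n)⁻¹ * ZMod.mul_inv_of_unit _ (hunit _ (sub_mem_coprimeRange hN hi))

theorem sum_coprimeRange_inv_mul_inv_sub_eq_zero {p j : ℕ} (hp : p.Prime) (hp5 : 5 ≤ p)
    (hj : 0 < j) (m : ℕ) :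
    ∑ i ∈ coprimeRange p (m * p ^ j),
      (i : ZMod (p ^ j))⁻¹ * ((m * p ^ j - i : ℕ) : ZMod (p ^ j))⁻¹ = 0 := by
  have hterm (i : ℕ) (hi : i ∈ coprimeRange p (m * p ^ j)) :
      (i : ZMod (p ^ j))⁻¹ * ((m * p ^ j - i : ℕ) : ZMod (p ^ j))⁻¹ =
        -(i : ZMod (p ^ j))⁻¹ ^ 2 := by
    rw [Nat.cast_sub (mem_coprimeRange.mp hi).1.le, Nat.cast_mul, ZMod.natCast_self, mul_zero,
      zero_sub, ZMod.neg_inv (isUnit_natCast_of_mem_coprimeRange hp hj hi)]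
    ring
  rw [sum_congr rfl hterm, sum_neg_distrib, sum_coprimeRange_inv_pow_eq_zero (c := 2) hp hj m
    (Nat.not_dvd_of_pos_of_lt two_pos (by omega)) (Nat.not_dvd_of_pos_of_lt three_pos (by omega)),
    neg_zero]

theorem sum_coprimeRange_inv_eq_zero {p j : ℕ} (hp : p.Prime) (hp5 : 5 ≤ p) (hj : 0 < j)
    (m : ℕ) : ∑ i ∈ coprimeRange p (m * p ^ j), (i : ZMod (p ^ (2 * j)))⁻¹ = 0 := by
  have hpN : p ∣ m * p ^ j := dvd_mul_of_dvd_right (dvd_pow_self p hj.ne') m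
  have hunit {i : ℕ} (hi : i ∈ coprimeRange p (m * p ^ j)) : IsUnit (i : ZMod (p ^ (2 * j))) :=
    isUnit_natCast_of_mem_coprimeRange hp (by omega) hi
  have hT := ZMod.natCast_mul_eq_zero_of_castHom_eq_zero (d := p ^ j) (e := p ^ j)
    (x := ∑ i ∈ coprimeRange p (m * p ^ j),
      (i : ZMod (p ^ (2 * j)))⁻¹ * ((m * p ^ j - i : ℕ) : ZMod (p ^ (2 * j)))⁻¹)
    (by rw [← pow_add, two_mul]) (by
      rw [map_sum, ← sum_coprimeRange_inv_mul_inv_sub_eq_zero hp hp5 hj m]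
      refine sum_congr rfl fun i hi => ?_
      rw [map_mul, ZMod.castHom_inv_natCast _ (hunit hi),
        ZMod.castHom_inv_natCast _ (hunit (sub_mem_coprimeRange hpN hi))])
  refine (ZMod.isUnit_two_of_prime_pow hp (by omega)).mul_right_eq_zero.mp ?_
  rw [two_mul_sum_coprimeRange_inv hpN fun i hi => hunit hi, Nat.cast_mul, mul_assoc, hT,
    mul_zero]

theorem succ_ascFactorial_eq_mul_prod_coprimeRange {p : ℕ} (hp : 0 < p) (y : ℕ) :
    (y + 1).ascFactorial p = (y + p) * ∏ r ∈ coprimeRange p p, (y + r) := by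
  obtain ⟨q, rfl⟩ := Nat.exists_eq_succ_of_ne_zero hp.ne'
  rw [Nat.ascFactorial_eq_prod_range, coprimeRange, prod_filter, prod_range_succ,
    prod_range_succ' (fun r => if ¬q.succ ∣ r then y + r else 1)]
  simp only [dvd_zero, not_true_eq_false, if_false, mul_one]
  rw [mul_comm]
  congr 1
  · omega
  · refine prod_congr rfl fun r hr => ?_
    rw [if_pos (Nat.not_dvd_of_pos_of_lt r.succ_pos (by simpa using hr))]
    ring

theorem ascFactorial_mul_eq_pow_mul_prod_coprimeRange {p : ℕ} (hp : 0 < p) (c b : ℕ) :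
    (c * p + 1).ascFactorial (b * p) =
      p ^ b * (c + 1).ascFactorial b * ∏ i ∈ coprimeRange p (b * p), (c * p + i) := by
  induction b with
  | zero => simp [coprimeRange]
  | succ b ih =>
    rw [add_one_mul, ← Nat.ascFactorial_mul_ascFactorial, ih,
      prod_coprimeRange_add (dvd_mul_left p b), add_right_comm, ← add_mul,
      succ_ascFactorial_eq_mul_prod_coprimeRange hp, Nat.ascFactorial_succ]
    simp only [← add_assoc, ← add_mul]
    ring

theorem choose_mul_mul_prod_coprimeRange {p : ℕ} (hp : 0 < p) (b c : ℕ) :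
    ((b + c) * p).choose (b * p) * ∏ i ∈ coprimeRange p (b * p), i =
      (b + c).choose b * ∏ i ∈ coprimeRange p (b * p), (c * p + i) := by
  have hc := ascFactorial_mul_eq_pow_mul_prod_coprimeRange hp c b
  have h0 := ascFactorial_mul_eq_pow_mul_prod_coprimeRange hp 0 b
  rw [Nat.ascFactorial_eq_factorial_mul_choose, Nat.ascFactorial_eq_factorial_mul_choose,
    ← add_mul, add_comm c] at hc
  simp only [zero_mul, zero_add, Nat.one_ascFactorial] at h0
  refine Nat.eq_of_mul_eq_mul_left (Nat.mul_pos (pow_pos hp b) b.factorial_pos) ?_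
  calc p ^ b * b ! * (((b + c) * p).choose (b * p) * ∏ i ∈ coprimeRange p (b * p), i)
      = (b * p) ! * ((b + c) * p).choose (b * p) := by rw [h0]; ring
    _ = p ^ b * b ! * ((b + c).choose b * ∏ i ∈ coprimeRange p (b * p), (c * p + i)) := by
      rw [hc]; ring

theorem prod_coprimeRange_add_eq_prod {p j : ℕ} (hp : p.Prime) (hp5 : 5 ≤ p) (hj : 0 < j)
    (m c : ℕ) :
    ∏ i ∈ coprimeRange p (m * p ^ j), ((c * p ^ j + i : ℕ) : ZMod (p ^ (3 * j))) =
      ∏ i ∈ coprimeRange p (m * p ^ j), (i : ZMod (p ^ (3 * j))) := by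
  set I := coprimeRange p (m * p ^ j)
  set A : ZMod (p ^ (3 * j)) := c * p ^ j
  have hunit {e : ℕ} (he : 0 < e) {i : ℕ} (hi : i ∈ I) : IsUnit (i : ZMod (p ^ e)) :=
    isUnit_natCast_of_mem_coprimeRange hp he hi
  have hpow (e : ℕ) : (p : ZMod (p ^ (3 * j))) ^ e = ((p ^ e : ℕ) : ZMod (p ^ (3 * j))) := by
    push_cast; rfl
  have hfactor (i : ℕ) (hi : i ∈ I) :
      ((c * p ^ j + i : ℕ) : ZMod (p ^ (3 * j))) =
        i * (1 + A * (i : ZMod (p ^ (3 * j)))⁻¹) := by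
    push_cast
    linear_combination (-A) * ZMod.mul_inv_of_unit _ (hunit (e := 3 * j) (by omega) hi)
  have hsum := ZMod.natCast_mul_eq_zero_of_castHom_eq_zero (d := p ^ (2 * j)) (e := p ^ j)
    (x := ∑ i ∈ I, (i : ZMod (p ^ (3 * j)))⁻¹) (by rw [← pow_add]; congr 1; omega) (by
      rw [map_sum, ← sum_coprimeRange_inv_eq_zero hp hp5 hj m]
      exact sum_congr rfl fun i hi => ZMod.castHom_inv_natCast _ (hunit (by omega) hi))
  have hsq := ZMod.natCast_mul_eq_zero_of_castHom_eq_zero (d := p ^ j) (e := p ^ (2 * j))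
    (x := ∑ i ∈ I, (i : ZMod (p ^ (3 * j)))⁻¹ ^ 2) (by rw [← pow_add]; congr 1; omega) (by
      rw [map_sum, ← sum_coprimeRange_inv_pow_eq_zero (c := 2) (k := 2) hp hj m
        (Nat.not_dvd_of_pos_of_lt two_pos (by omega))
        (Nat.not_dvd_of_pos_of_lt three_pos (by omega))]
      exact sum_congr rfl fun i hi => by
        rw [map_pow, ZMod.castHom_inv_natCast _ (hunit (by omega) hi)])
  rw [prod_congr rfl hfactor, prod_mul_distrib, prod_one_add_mul_eq_one, mul_one]
  · exact ZMod.isUnit_two_of_prime_pow hp (by omega)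
  · rw [mul_pow, ← pow_mul, mul_comm j, hpow, ZMod.natCast_self, mul_zero]
  · rw [mul_assoc, hpow, hsum, mul_zero]
  · rw [mul_pow, ← pow_mul, mul_comm j 2, mul_assoc, hpow, hsq, mul_zero]

theorem choose_mul_pow_succ_modEq {p : ℕ} (hp : p.Prime) (hp5 : 5 ≤ p) (m c j : ℕ) :
    ((m + c) * p ^ (j + 1)).choose (m * p ^ (j + 1)) ≡
      ((m + c) * p ^ j).choose (m * p ^ j) [MOD p ^ (3 * (j + 1))] := by
  have hid := choose_mul_mul_prod_coprimeRange hp.pos (m * p ^ j) (c * p ^ j)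
  simp only [← add_mul, mul_assoc, ← pow_succ] at hid
  have hcast := congrArg (Nat.cast : ℕ → ZMod (p ^ (3 * (j + 1)))) hid
  push_cast only [Nat.cast_mul, Nat.cast_prod] at hcast
  rw [prod_coprimeRange_add_eq_prod hp hp5 j.succ_pos] at hcast
  rw [← ZMod.natCast_eq_natCast_iff]
  exact (IsUnit.prod_iff.mpr fun i hi =>
    isUnit_natCast_of_mem_coprimeRange hp (by omega) hi).mul_right_cancel hcast

theorem stmt5_general (p : ℕ) (hp : p.Prime) (hp5 : 5 ≤ p) (n m k : ℕ) (hmn : m ≤ n) :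
    (n * p ^ k).choose (m * p ^ k) ≡
      (n * p ^ ((k - 1) / 3)).choose (m * p ^ ((k - 1) / 3)) [MOD p ^ k] := by
  obtain ⟨c, rfl⟩ := Nat.exists_eq_add_of_le hmn
  refine Nat.le_induction (m := (k - 1) / 3)
    (P := fun j _ => ((m + c) * p ^ j).choose (m * p ^ j) ≡
      ((m + c) * p ^ ((k - 1) / 3)).choose (m * p ^ ((k - 1) / 3)) [MOD p ^ k])
    rfl (fun j hj ih => ?_) k (by omega)
  exact ((choose_mul_pow_succ_modEq hp hp5 m c j).of_dvd (pow_dvd_pow p (by omega))).trans ih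

theorem stmt5 (p : ℕ) (hp : p.Prime) (hp5 : 5 ≤ p) (n m k : ℕ) (hmn : m ≤ n) (hk : 1 ≤ k) :
    (n * p ^ k).choose (m * p ^ k) ≡
      (n * p ^ ((k - 1) / 3)).choose (m * p ^ ((k - 1) / 3)) [MOD p ^ k] :=
  stmt5_general p hp hp5 n m k hmn
end

section
/- For all nonnegative integers n ≥ m and k ≥ 1, the binomial coefficient C(n·2^k, m·2^k) is congruent to C(n·2^⌊k/2⌋, m·2^⌊k/2⌋) modulo 2^k. -/
/-!
Writing `oddProd x = 1 · 3 ⋯ (2x - 1)`, the identity `(2x)! = 2^x · x! · oddProd x` gives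
`C(2a, 2b) · oddProd b · oddProd (a - b) = C(a, b) · oddProd a`, so, the odd factors being units
modulo powers of 2, `C(2a, 2b) ≡ C(a, b)` as soon as `oddProd a ≡ oddProd b · oddProd (a - b)`.
Now `oddProd a / oddProd b` is the product of the `c = a - b` odd numbers `2b + 1, …, 2b + 2c - 1`,
that is `∏ (2b + oᵢ)` over the first `c` odd numbers `oᵢ`. Pairing `oᵢ` with `o_{c-1-i}`, whose
sum is `2c`, each pair satisfies `(2b + o)(2b + o') = o o' + 4bc + 4b²`; when `2^j` divides `b` and
`c` this is `o o'` modulo `2^(2j+2)`. Hence `C(2^(j+1) n, 2^(j+1) m) ≡ C(2^j n, 2^j m)` modulo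
`2^(2j+2)`, and chaining these steps from `j = ⌊k/2⌋` upwards proves the claim modulo `2^k`.
-/

open Finset

lemma prod_range_two_mul_eq_prod_mul_reflect {M : Type*} [CommMonoid M] (f : ℕ → M) (d : ℕ) :
    ∏ i ∈ range (2 * d), f i = ∏ i ∈ range d, f i * f (2 * d - 1 - i) := by
  rw [two_mul, prod_range_add, ← prod_range_reflect (fun i => f (d + i)) d, ← prod_mul_distrib]
  refine prod_congr rfl fun i hi => ?_
  have hi := mem_range.mp hi
  congr 2
  omega

lemma prod_range_two_mul_add_odd {R : Type*} [CommRing R] {t : R} {d : ℕ} (htt : t * t = 0)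
    (htd : t * (4 * d) = 0) :
    ∏ i ∈ range (2 * d), (t + (2 * (i : R) + 1)) = ∏ i ∈ range (2 * d), (2 * (i : R) + 1) := by
  rw [prod_range_two_mul_eq_prod_mul_reflect, prod_range_two_mul_eq_prod_mul_reflect]
  refine prod_congr rfl fun i hi => ?_
  have hxy : (2 * (i : R) + 1) + (2 * ((2 * d - 1 - i : ℕ) : R) + 1) = 4 * d := by
    have hi := mem_range.mp hi
    have : (2 * i + 1) + (2 * (2 * d - 1 - i) + 1) = 4 * d := by omega
    simpa using congrArg (Nat.cast : ℕ → R) this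
  set x : R := 2 * (i : R) + 1
  set y : R := 2 * ((2 * d - 1 - i : ℕ) : R) + 1
  calc (t + x) * (t + y) = x * y + t * (x + y) + t * t := by ring
    _ = x * y := by rw [hxy, htd, htt, add_zero, add_zero]

def oddProd (x : ℕ) : ℕ := ∏ i ∈ range x, (2 * i + 1)

lemma oddProd_succ (x : ℕ) : oddProd (x + 1) = oddProd x * (2 * x + 1) := prod_range_succ _ _

lemma odd_oddProd (x : ℕ) : Odd (oddProd x) := by
  induction x with
  | zero => exact odd_one
  | succ x ih => rw [oddProd_succ]; exact ih.mul (odd_two_mul_add_one x)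

lemma oddProd_add (b c : ℕ) :
    oddProd (b + c) = oddProd b * ∏ i ∈ range c, (2 * b + (2 * i + 1)) := by
  rw [oddProd, prod_range_add]
  congr 1
  exact prod_congr rfl fun i _ => by ring

lemma factorial_two_mul_eq (x : ℕ) : (2 * x).factorial = 2 ^ x * x.factorial * oddProd x := by
  induction x with
  | zero => rfl
  | succ x ih =>
    rw [show 2 * (x + 1) = 2 * x + 1 + 1 by ring, Nat.factorial_succ, Nat.factorial_succ, ih,
      oddProd_succ, Nat.factorial_succ]
    ring

lemma choose_two_mul_mul_oddProd {a b : ℕ} (hba : b ≤ a) :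
    (2 * a).choose (2 * b) * (oddProd b * oddProd (a - b)) = a.choose b * oddProd a := by
  have hfac : (2 * a).choose (2 * b) * ((2 * b).factorial * (2 * (a - b)).factorial)
      = (2 * a).factorial := by
    rw [← mul_assoc, show 2 * (a - b) = 2 * a - 2 * b by omega,
      Nat.choose_mul_factorial_mul_factorial (by omega)]
  have hpos : 0 < 2 ^ a * (b.factorial * (a - b).factorial) := by positivity
  apply Nat.eq_of_mul_eq_mul_right hpos
  calc (2 * a).choose (2 * b) * (oddProd b * oddProd (a - b)) *
        (2 ^ a * (b.factorial * (a - b).factorial))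
      = (2 * a).choose (2 * b) * ((2 ^ b * b.factorial * oddProd b) *
          (2 ^ (a - b) * (a - b).factorial * oddProd (a - b))) := by
        rw [← Nat.add_sub_cancel' hba, pow_add, Nat.add_sub_cancel_left]
        ring
    _ = (2 * a).factorial := by rw [← factorial_two_mul_eq, ← factorial_two_mul_eq, hfac]
    _ = a.choose b * oddProd a * (2 ^ a * (b.factorial * (a - b).factorial)) := by
        rw [factorial_two_mul_eq, ← Nat.choose_mul_factorial_mul_factorial hba]
        ring

lemma choose_two_mul_modEq_of_oddProd_modEq {a b r : ℕ} (hba : b ≤ a)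
    (h : oddProd a ≡ oddProd b * oddProd (a - b) [MOD 2 ^ r]) :
    (2 * a).choose (2 * b) ≡ a.choose b [MOD 2 ^ r] := by
  have hcop : Nat.Coprime (2 ^ r) (oddProd b * oddProd (a - b)) :=
    Nat.Coprime.pow_left r (Nat.coprime_two_left.mpr ((odd_oddProd b).mul (odd_oddProd _)))
  refine Nat.ModEq.cancel_right_of_coprime hcop ?_
  rw [choose_two_mul_mul_oddProd hba]
  exact h.mul_left _

lemma choose_two_mul_modEq_two {a b : ℕ} (hba : b ≤ a) :
    (2 * a).choose (2 * b) ≡ a.choose b [MOD 2] := by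
  refine choose_two_mul_modEq_of_oddProd_modEq (r := 1) hba ?_
  exact (Nat.odd_iff.mp (odd_oddProd a)).trans
    (Nat.odd_iff.mp ((odd_oddProd b).mul (odd_oddProd _))).symm

lemma oddProd_add_modEq {b c j : ℕ} (hj : 1 ≤ j) (hb : 2 ^ j ∣ b) (hc : 2 ^ j ∣ c) :
    oddProd (b + c) ≡ oddProd b * oddProd c [MOD 2 ^ (2 * (j + 1))] := by
  obtain ⟨d, rfl⟩ : 2 ∣ c := (dvd_pow_self 2 (by omega)).trans hc
  have h2b : 2 ^ (j + 1) ∣ 2 * b := by rw [pow_succ']; exact mul_dvd_mul_left 2 hb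
  have h4d : 2 ^ (j + 1) ∣ 4 * d := by
    rw [pow_succ', show 4 * d = 2 * (2 * d) by ring]; exact mul_dvd_mul_left 2 hc
  have hsq : 2 ^ (2 * (j + 1)) = 2 ^ (j + 1) * 2 ^ (j + 1) := by ring
  have htt := (ZMod.natCast_eq_zero_iff (2 * b * (2 * b)) _).mpr (hsq ▸ mul_dvd_mul h2b h2b)
  have htd := (ZMod.natCast_eq_zero_iff (2 * b * (4 * d)) _).mpr (hsq ▸ mul_dvd_mul h2b h4d)
  push_cast at htt htd
  rw [oddProd_add, ← ZMod.natCast_eq_natCast_iff]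
  push_cast [oddProd]
  rw [prod_range_two_mul_add_odd htt htd]

lemma choose_two_mul_modEq {a b j : ℕ} (hj : 1 ≤ j) (hba : b ≤ a) (ha : 2 ^ j ∣ a)
    (hb : 2 ^ j ∣ b) : (2 * a).choose (2 * b) ≡ a.choose b [MOD 2 ^ (2 * (j + 1))] := by
  refine choose_two_mul_modEq_of_oddProd_modEq hba ?_
  simpa only [Nat.add_sub_cancel' hba] using oddProd_add_modEq hj hb (Nat.dvd_sub ha hb)

lemma choose_mul_two_pow_modEq {n m j K : ℕ} (hmn : m ≤ n) (hj : 1 ≤ j) (hK : K ≤ 2 * j + 2)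
    {k : ℕ} (hjk : j ≤ k) :
    (n * 2 ^ k).choose (m * 2 ^ k) ≡ (n * 2 ^ j).choose (m * 2 ^ j) [MOD 2 ^ K] := by
  induction k, hjk using Nat.le_induction with
  | base => rfl
  | succ k hjk ih =>
    have hstep : (n * 2 ^ (k + 1)).choose (m * 2 ^ (k + 1)) ≡ (n * 2 ^ k).choose (m * 2 ^ k)
        [MOD 2 ^ (2 * (k + 1))] := by
      have hdouble (x : ℕ) : x * 2 ^ (k + 1) = 2 * (x * 2 ^ k) := by ring
      rw [hdouble, hdouble]
      exact choose_two_mul_modEq (by omega) (Nat.mul_le_mul_right _ hmn) (dvd_mul_left _ _)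
        (dvd_mul_left _ _)
    exact (hstep.of_dvd (pow_dvd_pow 2 (by omega))).trans ih

theorem stmt6_general (n m k : ℕ) (hmn : m ≤ n) :
    (n * 2 ^ k).choose (m * 2 ^ k) ≡ (n * 2 ^ (k / 2)).choose (m * 2 ^ (k / 2)) [MOD 2 ^ k] := by
  rcases Nat.eq_zero_or_pos (k / 2) with hk | hk
  · rw [hk, pow_zero, mul_one, mul_one]
    obtain rfl | rfl : k = 0 ∨ k = 1 := by omega
    · rw [pow_zero]; exact Nat.modEq_one
    · simpa only [pow_one, mul_comm _ 2] using choose_two_mul_modEq_two hmn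
  · exact choose_mul_two_pow_modEq hmn hk (by omega) (Nat.div_le_self k 2)

theorem stmt6 (n m k : ℕ) (hmn : m ≤ n) (hk : 1 ≤ k) :
    (n * 2 ^ k).choose (m * 2 ^ k) ≡ (n * 2 ^ (k / 2)).choose (m * 2 ^ (k / 2)) [MOD 2 ^ k] :=
  stmt6_general n m k hmn
end

section
/- For all nonnegative integers n ≥ m and k ≥ 1, the binomial coefficient C(n·3^k, m·3^k) is congruent to C(n·3^⌊(k−1)/2⌋, m·3^⌊(k−1)/2⌋) modulo 3^k. -/
/-!
Write `(3c)! = 3^c · c! · Q c`, where `Q c = ∏_{i<c} (3i+1)(3i+2)` collects the factors prime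
to `3`. Then `C(3a, 3b) · Q b · Q (a-b) = C(a, b) · Q a`, and pairing the factor `3(b+i)+1` of
`Q a / Q b` with `3(a-1-i)+2` shows `Q a ≡ Q b · Q (a-b)` modulo `9ab`. Since `Q` is prime to `3`,
this gives `C(3a, 3b) ≡ C(a, b) [MOD 3^(2e+2)]` whenever `3^e` divides `a` and `b`. Applying it to
`a = n·3^e, b = m·3^e` for `e = ⌊(k-1)/2⌋, …, k-1` descends from `3^k` to `3^⌊(k-1)/2⌋`, each
step holding modulo `3^(2e+2)`, a multiple of `3^k`.
-/

open Finset
open scoped Nat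

def primeToThreeFactorial (c : ℕ) : ℕ := ∏ i ∈ range c, (3 * i + 1) * (3 * i + 2)

theorem factorial_three_mul (c : ℕ) :
    (3 * c)! = 3 ^ c * c ! * primeToThreeFactorial c := by
  induction c with
  | zero => simp [primeToThreeFactorial]
  | succ c ih =>
    rw [show 3 * (c + 1) = 3 * c + 2 + 1 by ring, Nat.factorial_succ, Nat.factorial_succ,
      Nat.factorial_succ, ih]
    simp only [primeToThreeFactorial, prod_range_succ, Nat.factorial_succ]
    ring

theorem coprime_three_primeToThreeFactorial (c : ℕ) :
    Nat.Coprime 3 (primeToThreeFactorial c) :=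
  Nat.Coprime.prod_right fun i _ =>
    Nat.Coprime.mul_right (Nat.prime_three.coprime_iff_not_dvd.mpr (by omega))
      (Nat.prime_three.coprime_iff_not_dvd.mpr (by omega))

theorem primeToThreeFactorial_add (b c : ℕ) :
    primeToThreeFactorial (b + c) =
      primeToThreeFactorial b * ∏ i ∈ range c, (3 * (b + i) + 1) * (3 * (b + i) + 2) :=
  prod_range_add _ b c

theorem choose_three_mul_mul_primeToThreeFactorial (b c : ℕ) :
    (3 * (b + c)).choose (3 * b) * (primeToThreeFactorial b * primeToThreeFactorial c) =
      (b + c).choose b * primeToThreeFactorial (b + c) := by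
  have hbig := Nat.choose_mul_factorial_mul_factorial (show 3 * b ≤ 3 * (b + c) by omega)
  have hsmall := Nat.choose_mul_factorial_mul_factorial (Nat.le_add_right b c)
  rw [show 3 * (b + c) - 3 * b = 3 * c by omega, factorial_three_mul, factorial_three_mul,
    factorial_three_mul, ← hsmall, Nat.add_sub_cancel_left] at hbig
  refine Nat.eq_of_mul_eq_mul_left (by positivity : 0 < 3 ^ (b + c) * b ! * c !) ?_
  linear_combination hbig

theorem prod_shifted_modEq_primeToThreeFactorial (b c : ℕ) :
    ∏ i ∈ range c, (3 * (b + i) + 1) * (3 * (b + i) + 2) ≡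
      primeToThreeFactorial c [MOD 9 * b * (b + c)] := by
  have hpair : ∀ i ∈ range c, (3 * (b + i) + 1) * (3 * (b + (c - 1 - i)) + 2) ≡
      (3 * i + 1) * (3 * (c - 1 - i) + 2) [MOD 9 * b * (b + c)] := by
    intro i hi
    obtain ⟨j, rfl⟩ : ∃ j, c = i + j + 1 := ⟨c - 1 - i, by simp at hi; omega⟩
    rw [show i + j + 1 - 1 - i = j by omega, show (3 * (b + i) + 1) * (3 * (b + j) + 2) =
      (3 * i + 1) * (3 * j + 2) + 9 * b * (b + (i + j + 1)) by ring]
    exact Nat.add_modEq_right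
  have hreflect : ∀ f g : ℕ → ℕ, ∏ i ∈ range c, f i * g i =
      ∏ i ∈ range c, f i * g (c - 1 - i) := fun f g => by
    rw [prod_mul_distrib, prod_mul_distrib, prod_range_reflect g c]
  rw [primeToThreeFactorial, hreflect, hreflect fun i => 3 * i + 1]
  exact Nat.ModEq.prod hpair

theorem choose_three_mul_modEq (b c t : ℕ) (ht : 3 ^ t ∣ 9 * b * (b + c)) :
    (3 * (b + c)).choose (3 * b) ≡ (b + c).choose b [MOD 3 ^ t] := by
  have hQ : primeToThreeFactorial (b + c) ≡
      primeToThreeFactorial b * primeToThreeFactorial c [MOD 3 ^ t] := by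
    rw [primeToThreeFactorial_add]
    exact ((prod_shifted_modEq_primeToThreeFactorial b c).of_dvd ht).mul_left _
  refine Nat.ModEq.cancel_right_of_coprime (c := primeToThreeFactorial b * primeToThreeFactorial c)
    ?_ ?_
  · exact Nat.Coprime.pow_left t ((coprime_three_primeToThreeFactorial b).mul_right
      (coprime_three_primeToThreeFactorial c))
  · rw [choose_three_mul_mul_primeToThreeFactorial]
    exact hQ.mul_left _

theorem choose_mul_three_pow_succ_modEq {m n : ℕ} (hmn : m ≤ n) (e : ℕ) :
    (n * 3 ^ (e + 1)).choose (m * 3 ^ (e + 1)) ≡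
      (n * 3 ^ e).choose (m * 3 ^ e) [MOD 3 ^ (2 * e + 2)] := by
  obtain ⟨c, rfl⟩ := Nat.exists_eq_add_of_le hmn
  have hpow : ∀ x, x * 3 ^ (e + 1) = 3 * (x * 3 ^ e) := fun x => by ring
  rw [hpow, hpow, add_mul]
  exact choose_three_mul_modEq _ _ _ ⟨m * (m + c), by ring⟩

theorem choose_mul_three_pow_add_modEq {m n : ℕ} (hmn : m ≤ n) (e d : ℕ) :
    (n * 3 ^ (e + d)).choose (m * 3 ^ (e + d)) ≡
      (n * 3 ^ e).choose (m * 3 ^ e) [MOD 3 ^ (2 * e + 2)] := by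
  induction d with
  | zero => rfl
  | succ d ih =>
    refine Nat.ModEq.trans ?_ ih
    exact (choose_mul_three_pow_succ_modEq hmn (e + d)).of_dvd (pow_dvd_pow 3 (by omega))

theorem stmt7_general (n m k : ℕ) (hmn : m ≤ n) :
    (n * 3 ^ k).choose (m * 3 ^ k) ≡
      (n * 3 ^ ((k - 1) / 2)).choose (m * 3 ^ ((k - 1) / 2)) [MOD 3 ^ k] := by
  have h := choose_mul_three_pow_add_modEq hmn ((k - 1) / 2) (k - (k - 1) / 2)
  rw [Nat.add_sub_cancel' (by omega)] at h
  exact h.of_dvd (pow_dvd_pow 3 (by omega))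

theorem stmt7 (n m k : ℕ) (hmn : m ≤ n) (hk : 1 ≤ k) :
    (n * 3 ^ k).choose (m * 3 ^ k) ≡
      (n * 3 ^ ((k - 1) / 2)).choose (m * 3 ^ ((k - 1) / 2)) [MOD 3 ^ k] :=
  stmt7_general n m k hmn
end

section
/- For every integer k ≥ 1 and all nonnegative integers n, m, n₀, m₀ with n₀ < 2 and m₀ < 2, the binomial coefficient C(n·2^k + n₀, m·2^k + m₀) is congruent to C(n·2^⌊k/2⌋, m·2^⌊k/2⌋)·C(n₀, m₀) modulo 2^k. -/
/-!
Write `N = n·2^k` and `M = m·2^k`. The last binary digits split off as in Lucas' theorem: by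
Pascal's rule and symmetry everything reduces to `2^k ∣ C(N, M+1)`, which follows from
`(M+1)·C(N, M+1) = (N-M)·C(N, M)` with `M+1` odd.

It remains to halve `N` and `M` down to `n·2^⌊k/2⌋` and `m·2^⌊k/2⌋`. Expanding
`(1+X)^(2a) = (2X + (1+X²))^a` gives `C(2a, 2b) = ∑ᵢ 4^i C(a, 2i) C(a-2i, b-i)`. When `2^v`
divides `a` and `b`, each term with `i ≥ 1` is divisible by `2^(2v+2)`: multiplied by `(2i)!` it
becomes `C(a, b)·b⋯(b-i+1)·(a-b)⋯(a-b-i+1)`, which is divisible by `2^(2v+1)`, while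
`v₂((2i)!) < 2i`. Hence `C(2a, 2b) ≡ C(a, b) mod 2^(2v+2)`, and `2v+2 > k` once `v ≥ ⌊k/2⌋`.
-/

open Polynomial Finset

theorem coeff_X_sq_add_one_pow (c d : ℕ) :
    ((X ^ 2 + 1 : ℕ[X]) ^ c).coeff d = if 2 ∣ d then c.choose (d / 2) else 0 := by
  have : (X ^ 2 + 1 : ℕ[X]) ^ c = expand ℕ 2 ((X + 1) ^ c) := by simp
  rw [this, coeff_expand two_pos, coeff_X_add_one_pow, Nat.cast_id]

theorem coeff_two_X_pow_mul_X_sq_add_one_pow (j c d : ℕ) :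
    ((2 * X) ^ j * (X ^ 2 + 1 : ℕ[X]) ^ c).coeff d =
      if j ≤ d ∧ 2 ∣ d - j then 2 ^ j * c.choose ((d - j) / 2) else 0 := by
  rw [mul_pow, mul_assoc, show (2 : ℕ[X]) ^ j = C (2 ^ j) by simp, coeff_C_mul, coeff_X_pow_mul',
    coeff_X_sq_add_one_pow]
  split_ifs <;> simp_all

theorem choose_two_mul_two_mul_eq_sum (a b : ℕ) :
    (2 * a).choose (2 * b) =
      ∑ i ∈ range (b + 1), 4 ^ i * a.choose (2 * i) * (a - 2 * i).choose (b - i) := by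
  have hsq : (X + 1 : ℕ[X]) ^ 2 = 2 * X + (X ^ 2 + 1) := by ring
  have hcoeff := coeff_X_add_one_pow ℕ (2 * a) (2 * b)
  rw [Nat.cast_id, pow_mul, hsq, add_pow, finsetSum_coeff] at hcoeff
  simp only [coeff_mul_natCast, coeff_two_X_pow_mul_X_sq_add_one_pow] at hcoeff
  rw [← hcoeff]
  symm
  refine sum_bij_ne_zero (fun i _ _ => 2 * i) ?_ (fun _ _ _ _ _ _ h => by omega) ?_ ?_
  · intro i _ hi
    simp only [mem_range]
    by_contra h
    exact hi (by rw [Nat.choose_eq_zero_of_lt (by omega)]; simp)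
  · intro j hj hne
    split_ifs at hne with hjb
    · refine ⟨j / 2, mem_range.2 (by omega), ?_, by omega⟩
      obtain ⟨i, rfl⟩ : ∃ i, j = 2 * i := ⟨j / 2, by omega⟩
      rw [show (2 * b - 2 * i) / 2 = b - i by omega] at hne
      rw [Nat.mul_div_cancel_left i two_pos]
      simp_all [pow_mul]
    · simp at hne
  · intro i hi _
    rw [mem_range] at hi
    rw [if_pos ⟨by omega, by omega⟩, pow_mul, show 2 * b - 2 * i = 2 * (b - i) by omega]
    norm_num
    ring

theorem choose_mul_choose_mul_factorial {a b i : ℕ} (hib : i ≤ b) (hba : b + i ≤ a) :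
    a.choose (2 * i) * (a - 2 * i).choose (b - i) * (2 * i).factorial =
      a.choose b * b.descFactorial i * (a - b).descFactorial i := by
  obtain ⟨d, rfl⟩ := Nat.exists_eq_add_of_le hib
  obtain ⟨c, rfl⟩ := Nat.exists_eq_add_of_le hba
  -- multiplied by `d! c!`, both sides become `a!`
  refine Nat.eq_of_mul_eq_mul_right (Nat.mul_pos d.factorial_pos c.factorial_pos) ?_
  have hsub : i + d + i + c - (i + d) = i + c := by omega
  have h2i := Nat.choose_mul_factorial_mul_factorial (n := i + d + i + c) (k := 2 * i) (by omega)
  have hdc := Nat.choose_mul_factorial_mul_factorial (Nat.le_add_right d c)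
  have hb := Nat.choose_mul_factorial_mul_factorial (n := i + d + i + c) (k := i + d) (by omega)
  rw [show i + d + i + c - 2 * i = d + c by omega] at h2i
  rw [Nat.add_sub_cancel_left] at hdc
  rw [hsub, ← Nat.factorial_mul_descFactorial (Nat.le_add_right i d),
    ← Nat.factorial_mul_descFactorial (Nat.le_add_right i c)] at hb
  rw [show i + d + i + c - 2 * i = d + c by omega, hsub, Nat.add_sub_cancel_left]
  calc _ = (i + d + i + c).choose (2 * i) * (2 * i).factorial *
        ((d + c).choose d * d.factorial * c.factorial) := by ring
    _ = (i + d + i + c).factorial := by rw [hdc, h2i]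
    _ = _ := by rw [← hb]; simp only [Nat.add_sub_cancel_left]; ring

theorem two_pow_succ_dvd_add {v x y : ℕ} (hx : 2 ^ v ∣ x) (hy : 2 ^ v ∣ y)
    (hx' : ¬2 ^ (v + 1) ∣ x) (hy' : ¬2 ^ (v + 1) ∣ y) : 2 ^ (v + 1) ∣ x + y := by
  obtain ⟨x, rfl⟩ := hx
  obtain ⟨y, rfl⟩ := hy
  rw [pow_succ, Nat.mul_dvd_mul_iff_left (by positivity)] at hx' hy'
  rw [← mul_add, pow_succ, Nat.mul_dvd_mul_iff_left (by positivity)]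
  omega

theorem two_pow_dvd_choose_mul_mul_sub {v a b : ℕ} (ha : 2 ^ v ∣ a) (hb : 2 ^ v ∣ b)
    (hba : b ≤ a) :
    2 ^ (2 * v + 1) ∣ a.choose b * b * (a - b) := by
  have hab : 2 ^ v ∣ a - b := Nat.dvd_sub ha hb
  have hsplit : 2 ^ (2 * v + 1) = 2 ^ (v + 1) * 2 ^ v := by ring
  by_cases hb' : 2 ^ (v + 1) ∣ b
  · exact hsplit ▸ (mul_dvd_mul hb' hab).trans ⟨a.choose b, by ring⟩
  by_cases hab' : 2 ^ (v + 1) ∣ a - b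
  · exact hsplit ▸ (mul_dvd_mul hab' hb).trans ⟨a.choose b, by ring⟩
  -- `b` and `a - b` have valuation exactly `v`, so `a` gains a factor `2`; and `a ∣ C(a,b)·b`.
  have ha' : 2 ^ (v + 1) ∣ a := by
    simpa [Nat.add_sub_cancel' hba] using two_pow_succ_dvd_add hb hab hb' hab'
  obtain ⟨b, rfl⟩ : ∃ b', b = b' + 1 :=
    Nat.exists_eq_succ_of_ne_zero (by rintro rfl; exact hb' (dvd_zero _))
  obtain ⟨a, rfl⟩ : ∃ a', a = a' + 1 := Nat.exists_eq_succ_of_ne_zero (by omega)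
  rw [← Nat.add_one_mul_choose_eq, hsplit]
  exact (mul_dvd_mul ha' hab).trans ⟨a.choose b, by ring⟩

theorem two_pow_succ_dvd_two_pow_mul_of_dvd_mul_factorial {N x n : ℕ} (hn : n ≠ 0)
    (h : 2 ^ N ∣ x * n.factorial) : 2 ^ (N + 1) ∣ 2 ^ n * x := by
  obtain ⟨e, u, hu, hfac⟩ :=
    Nat.exists_eq_pow_mul_and_not_dvd n.factorial_ne_zero 2 (by norm_num)
  have hen : e < n := by
    have := (pow_dvd_iff_le_emultiplicity.1 (hfac ▸ dvd_mul_right (2 ^ e) u)).trans_lt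
      (Nat.emultiplicity_two_factorial_lt hn)
    exact_mod_cast this
  have hcop : Nat.Coprime (2 ^ N) u :=
    Nat.Coprime.pow_left _ ((Nat.Prime.coprime_iff_not_dvd Nat.prime_two).2 hu)
  have hN : 2 ^ N ∣ x * 2 ^ e := hcop.dvd_of_dvd_mul_right (by rwa [mul_assoc, ← hfac])
  refine Nat.dvd_of_mul_dvd_mul_right (pow_pos two_pos e) ?_
  calc 2 ^ (N + 1) * 2 ^ e = 2 ^ N * 2 ^ (e + 1) := by ring
    _ ∣ x * 2 ^ e * 2 ^ n := mul_dvd_mul hN (pow_dvd_pow 2 hen)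
    _ = 2 ^ n * x * 2 ^ e := by ring

theorem Nat.self_dvd_descFactorial (n : ℕ) {k : ℕ} (hk : k ≠ 0) :
    n ∣ n.descFactorial k := by
  obtain ⟨k, rfl⟩ := Nat.exists_eq_succ_of_ne_zero hk
  rcases n with _ | n
  · simp
  · rw [Nat.succ_descFactorial_succ]
    exact dvd_mul_right _ _

theorem two_pow_dvd_four_pow_mul_choose_mul_choose {v a b i : ℕ} (ha : 2 ^ v ∣ a)
    (hb : 2 ^ v ∣ b) (hi : i ≠ 0) (hib : i ≤ b) :
    2 ^ (2 * v + 2) ∣ 4 ^ i * a.choose (2 * i) * (a - 2 * i).choose (b - i) := by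
  by_cases hba : b + i ≤ a
  swap
  · rcases lt_or_ge a (2 * i) with h | h
    · simp [Nat.choose_eq_zero_of_lt h]
    · simp [Nat.choose_eq_zero_of_lt (by omega : a - 2 * i < b - i)]
  have hprod : 2 ^ (2 * v + 1) ∣
      a.choose (2 * i) * (a - 2 * i).choose (b - i) * (2 * i).factorial := by
    rw [choose_mul_choose_mul_factorial hib hba]
    exact (two_pow_dvd_choose_mul_mul_sub ha hb (by omega)).trans
      (mul_dvd_mul (mul_dvd_mul_left _ (b.self_dvd_descFactorial hi))
        ((a - b).self_dvd_descFactorial hi))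
  rw [show (4 : ℕ) ^ i = 2 ^ (2 * i) by rw [pow_mul]; norm_num, mul_assoc]
  exact two_pow_succ_dvd_two_pow_mul_of_dvd_mul_factorial (by omega) hprod

theorem choose_two_mul_two_mul_modEq {v a b : ℕ} (ha : 2 ^ v ∣ a) (hb : 2 ^ v ∣ b) :
    (2 * a).choose (2 * b) ≡ a.choose b [MOD 2 ^ (2 * v + 2)] := by
  have hhigher : 2 ^ (2 * v + 2) ∣ ∑ i ∈ range b,
      4 ^ (i + 1) * a.choose (2 * (i + 1)) * (a - 2 * (i + 1)).choose (b - (i + 1)) :=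
    dvd_sum fun i hi =>
      two_pow_dvd_four_pow_mul_choose_mul_choose ha hb i.succ_ne_zero (mem_range.1 hi)
  rw [choose_two_mul_two_mul_eq_sum, sum_range_succ']
  simpa using (Nat.modEq_zero_iff_dvd.2 hhigher).add_right (a.choose b)

theorem choose_mul_two_pow_add_modEq (n m v d : ℕ) :
    (n * 2 ^ (v + d)).choose (m * 2 ^ (v + d)) ≡ (n * 2 ^ v).choose (m * 2 ^ v)
      [MOD 2 ^ (2 * v + 2)] := by
  induction d with
  | zero => rfl
  | succ d ih =>
    have hstep := choose_two_mul_two_mul_modEq (v := v + d)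
      (dvd_mul_left (2 ^ (v + d)) n) (dvd_mul_left (2 ^ (v + d)) m)
    have hdouble (x : ℕ) : x * 2 ^ (v + (d + 1)) = 2 * (x * 2 ^ (v + d)) := by ring
    rw [hdouble, hdouble]
    exact (hstep.of_dvd (pow_dvd_pow 2 (by omega))).trans ih

theorem two_pow_dvd_choose_add_one {k N M : ℕ} (hN : 2 ^ k ∣ N) (hM : 2 ^ k ∣ M) :
    2 ^ k ∣ N.choose (M + 1) := by
  rcases k.eq_zero_or_pos with rfl | hk
  · simp
  have hodd : Odd (M + 1) := (even_iff_two_dvd.2 ((dvd_pow_self 2 hk.ne').trans hM)).add_one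
  refine (Nat.Coprime.pow_left k (Nat.coprime_two_left.2 hodd)).dvd_of_dvd_mul_right ?_
  rw [Nat.choose_succ_right_eq]
  exact (Nat.dvd_sub hN hM).mul_left _

theorem choose_add_one_add_one_modEq {k N M : ℕ} (hN : 2 ^ k ∣ N) (hM : 2 ^ k ∣ M) :
    (N + 1).choose (M + 1) ≡ N.choose M [MOD 2 ^ k] := by
  rw [Nat.choose_succ_succ']
  simpa using (Nat.modEq_zero_iff_dvd.2 (two_pow_dvd_choose_add_one hN hM)).add_left (N.choose M)

theorem choose_add_one_modEq {k N M : ℕ} (hN : 2 ^ k ∣ N) (hM : 2 ^ k ∣ M) :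
    (N + 1).choose M ≡ N.choose M [MOD 2 ^ k] := by
  rcases le_or_gt M N with hMN | hNM
  · rw [← Nat.choose_symm (by omega : M ≤ N + 1), ← Nat.choose_symm hMN,
      show N + 1 - M = N - M + 1 by omega]
    exact choose_add_one_add_one_modEq hN (Nat.dvd_sub hN hM)
  rcases k.eq_zero_or_pos with rfl | hk
  · exact Nat.modEq_one
  have hgap : 2 ^ k ≤ M - N := Nat.le_of_dvd (by omega) (Nat.dvd_sub hM hN)
  have htwo : 2 ≤ 2 ^ k := Nat.le_self_pow hk.ne' 2
  rw [Nat.choose_eq_zero_of_lt (by omega), Nat.choose_eq_zero_of_lt hNM]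

theorem choose_add_modEq_mul_choose {k N M n₀ m₀ : ℕ} (hN : 2 ^ k ∣ N) (hM : 2 ^ k ∣ M)
    (hn₀ : n₀ < 2) (hm₀ : m₀ < 2) :
    (N + n₀).choose (M + m₀) ≡ N.choose M * n₀.choose m₀ [MOD 2 ^ k] := by
  interval_cases n₀ <;> interval_cases m₀
  · simp [Nat.ModEq.refl]
  · simpa using Nat.modEq_zero_iff_dvd.2 (two_pow_dvd_choose_add_one hN hM)
  · simpa using choose_add_one_modEq hN hM
  · simpa using choose_add_one_add_one_modEq hN hM

theorem stmt9_general (k n m n0 m0 : ℕ) (hn0 : n0 < 2) (hm0 : m0 < 2) :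
    (n * 2 ^ k + n0).choose (m * 2 ^ k + m0) ≡
      (n * 2 ^ (k / 2)).choose (m * 2 ^ (k / 2)) * n0.choose m0 [MOD 2 ^ k] := by
  have hdigit := choose_add_modEq_mul_choose (dvd_mul_left (2 ^ k) n) (dvd_mul_left (2 ^ k) m)
    hn0 hm0
  have hhalf := choose_mul_two_pow_add_modEq n m (k / 2) (k - k / 2)
  rw [Nat.add_sub_cancel' (Nat.div_le_self k 2)] at hhalf
  exact hdigit.trans ((hhalf.of_dvd (pow_dvd_pow 2 (by omega))).mul_right _)

theorem stmt9 (k n m n0 m0 : ℕ) (hk : 1 ≤ k) (hn0 : n0 < 2) (hm0 : m0 < 2) :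
    (n * 2 ^ k + n0).choose (m * 2 ^ k + m0) ≡
      (n * 2 ^ (k / 2)).choose (m * 2 ^ (k / 2)) * n0.choose m0 [MOD 2 ^ k] :=
  stmt9_general k n m n0 m0 hn0 hm0
end

section
/- For every integer k ≥ 1 and all nonnegative integers n, m, n₀, m₀ with n₀ < 3 and m₀ < 3, the binomial coefficient C(n·3^k + n₀, m·3^k + m₀) is congruent to C(n·3^⌊(k−1)/2⌋, m·3^⌊(k−1)/2⌋)·C(n₀, m₀) modulo 3^k. -/
/-!
Vandermonde's identity, together with `p ^ k ∣ C(N, l)` whenever `p ^ k ∣ N` and `p ∤ l`, splits off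
the last base-`p` digits: `C(N + n₀, M + m₀) ≡ C(N, M) C(n₀, m₀) mod p ^ k`.

For the remaining factor we use a Jacobsthal-type congruence `C(pa, pb) ≡ C(a, b) mod p ^ (2(i+1))`
for `p ^ i ∣ a, b` and `p` odd. Removing the multiples of `p` from the factorials,
`C(pa + pb, pb) / C(a + b, b)` is the quotient of `∏ (pa + j)` by `∏ j` over `0 < j < pb`, `p ∤ j`.
Pairing `j` with `pb - j` shows that the squares of these two products agree modulo `p ^ (2(i+1))`,
and since the two products are congruent modulo the odd prime `p` and prime to it, their sum is
prime to `p`, so the products themselves agree.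
Iterating from the exponent `(k - 1) / 2` up to `k` loses nothing modulo `3 ^ k`, as
`k ≤ 2((k - 1) / 2 + 1)`.
-/

open Finset

namespace Nat

variable {p : ℕ}

/-- For `p ∣ s` and `p ∣ x`, the product of the factors of `(s + 1) ⋯ (s + x)` prime to `p`. -/
def coprimeAscProd (p s x : ℕ) : ℕ := ∏ j ∈ range x, if p ∣ j then 1 else s + j

theorem coprimeAscProd_add {x : ℕ} (hx : p ∣ x) (s y : ℕ) :
    coprimeAscProd p s (x + y) = coprimeAscProd p s x * coprimeAscProd p (s + x) y := by
  rw [coprimeAscProd, prod_range_add]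
  congr 1
  refine prod_congr rfl fun j _ => ?_
  simp only [(Nat.dvd_add_right hx).eq, add_assoc]

theorem ascFactorial_eq_mul_coprimeAscProd (hp : 0 < p) (t : ℕ) :
    (t + 1).ascFactorial p = (t + p) * coprimeAscProd p t p := by
  obtain ⟨q, rfl⟩ : ∃ q, p = q + 1 := ⟨p - 1, by omega⟩
  rw [ascFactorial_eq_prod_range, coprimeAscProd, prod_range_succ, prod_range_succ',
    if_pos (dvd_zero _), mul_one, mul_comm]
  congr 1
  · ring
  · refine prod_congr rfl fun j hj => ?_
    rw [if_neg (Nat.not_dvd_of_pos_of_lt j.succ_pos (succ_lt_succ (mem_range.1 hj)))]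
    ring

theorem ascFactorial_mul_eq_pow_mul_coprimeAscProd (hp : 0 < p) (s c : ℕ) :
    (p * s + 1).ascFactorial (p * c) =
      p ^ c * (s + 1).ascFactorial c * coprimeAscProd p (p * s) (p * c) := by
  induction c with
  | zero => simp [coprimeAscProd]
  | succ c ih =>
    rw [mul_add_one, ← ascFactorial_mul_ascFactorial, ih, coprimeAscProd_add (dvd_mul_right p c),
      add_right_comm, ascFactorial_eq_mul_coprimeAscProd hp, ascFactorial_succ, pow_succ]
    ring

theorem choose_mul_mul_coprimeAscProd (hp : 0 < p) (a b : ℕ) :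
    (p * a + p * b).choose (p * b) * coprimeAscProd p 0 (p * b) =
      (a + b).choose b * coprimeAscProd p (p * a) (p * b) := by
  have hb := ascFactorial_mul_eq_pow_mul_coprimeAscProd hp 0 b
  have hab := ascFactorial_mul_eq_pow_mul_coprimeAscProd hp a b
  rw [mul_zero, zero_add, one_ascFactorial, one_ascFactorial] at hb
  rw [ascFactorial_eq_factorial_mul_choose, ascFactorial_eq_factorial_mul_choose, hb] at hab
  have hpos : 0 < p ^ b * b ! := by positivity
  apply Nat.eq_of_mul_eq_mul_left hpos
  linear_combination hab

theorem coprime_coprimeAscProd (hp : p.Prime) {s : ℕ} (hs : p ∣ s) (x : ℕ) :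
    Coprime (coprimeAscProd p s x) p :=
  Coprime.prod_left fun j _ => by
    split_ifs with h
    · exact coprime_one_left p
    · exact (Coprime.symm <| (hp.coprime_iff_not_dvd).2 <| by rwa [Nat.dvd_add_right hs])

theorem coprimeAscProd_modEq {n s : ℕ} (hs : n ∣ s) (x : ℕ) :
    coprimeAscProd p s x ≡ coprimeAscProd p 0 x [MOD n] :=
  ModEq.prod fun j _ => by
    split_ifs
    · rfl
    · simpa using ((modEq_zero_iff_dvd.2 hs).add_right j)

/-- Pairing `s + j` with `s + (c - j)`, whose product is `s (s + c) + j (c - j)`. -/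
theorem coprimeAscProd_sq_modEq {d s c : ℕ} (hs : d ∣ s) (hc : d ∣ c) (hpc : p ∣ c) :
    coprimeAscProd p s c ^ 2 ≡ coprimeAscProd p 0 c ^ 2 [MOD d ^ 2] := by
  have hpaired : ∀ t, coprimeAscProd p t c ^ 2 = ∏ j ∈ range (c + 1),
      (if p ∣ j then 1 else t + j) * (if p ∣ c - j then 1 else t + (c - j)) := by
    intro t
    have hext : coprimeAscProd p t c = ∏ j ∈ range (c + 1), if p ∣ j then 1 else t + j := by
      rw [prod_range_succ, if_pos hpc, mul_one, coprimeAscProd]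
    rw [sq, hext]
    nth_rewrite 2 [← prod_range_reflect]
    rw [← prod_mul_distrib]
    simp only [add_tsub_cancel_right]
  rw [hpaired, hpaired]
  refine ModEq.prod fun j hj => ?_
  obtain ⟨e, rfl⟩ := exists_add_of_le (Nat.lt_succ_iff.1 (mem_range.1 hj))
  rw [add_tsub_cancel_left]
  by_cases hpj : p ∣ j
  · simp only [if_pos hpj, if_pos ((Nat.dvd_add_right hpj).1 hpc)]
    rfl
  · have hpe : ¬ p ∣ e := fun h => hpj ((Nat.dvd_add_left h).1 hpc)
    simp only [if_neg hpj, if_neg hpe, zero_add]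
    have hd2 : d ^ 2 ∣ s * (s + (j + e)) := sq d ▸ mul_dvd_mul hs (dvd_add hs hc)
    calc (s + j) * (s + e) = s * (s + (j + e)) + j * e := by ring
      _ ≡ 0 + j * e [MOD d ^ 2] := (modEq_zero_iff_dvd.2 hd2).add_right _
      _ = j * e := zero_add _

theorem ModEq.of_sq_modEq (hp : p.Prime) (hp2 : p ≠ 2) {x y e : ℕ} (hxy : x ≡ y [MOD p])
    (hy : Coprime y p) (h : x ^ 2 ≡ y ^ 2 [MOD p ^ e]) : x ≡ y [MOD p ^ e] := by
  have hsum : Coprime (p ^ e) (y + x) := by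
    refine Coprime.pow_left e ((hp.coprime_iff_not_dvd).2 fun hdvd => ?_)
    have h2y : p ∣ 2 * y := by
      rw [two_mul]
      exact modEq_zero_iff_dvd.1 ((hxy.add_left y).symm.trans (modEq_zero_iff_dvd.2 hdvd))
    rcases hp.dvd_mul.1 h2y with h2 | hpy
    · exact hp2 ((prime_dvd_prime_iff_eq hp prime_two).1 h2)
    · exact (hp.coprime_iff_not_dvd.1 hy.symm) hpy
  rw [modEq_iff_dvd] at h ⊢
  have hcop := Nat.isCoprime_iff_coprime.2 hsum
  push_cast at h hcop ⊢
  have hfactor : (y : ℤ) ^ 2 - x ^ 2 = (y - x) * (y + x) := by ring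
  exact hcop.dvd_of_dvd_mul_right (hfactor ▸ h)

theorem coprimeAscProd_modEq_of_pow_dvd (hp : p.Prime) (hp2 : p ≠ 2) {i b c : ℕ}
    (hb : p ^ i ∣ b) (hc : p ^ i ∣ c) :
    coprimeAscProd p (p * b) (p * c) ≡ coprimeAscProd p 0 (p * c) [MOD p ^ (2 * (i + 1))] := by
  refine ModEq.of_sq_modEq hp hp2 (coprimeAscProd_modEq (dvd_mul_right p b) _)
    (coprime_coprimeAscProd hp (dvd_zero p) _) ?_
  have hdvd : ∀ {a}, p ^ i ∣ a → p ^ (i + 1) ∣ p * a := fun h => by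
    rw [pow_succ']
    exact mul_dvd_mul_left p h
  rw [mul_comm 2, pow_mul]
  exact coprimeAscProd_sq_modEq (hdvd hb) (hdvd hc) (dvd_mul_right p c)

theorem choose_mul_modEq_choose (hp : p.Prime) (hp2 : p ≠ 2) {i a b : ℕ} (ha : p ^ i ∣ a)
    (hb : p ^ i ∣ b) : (p * a).choose (p * b) ≡ a.choose b [MOD p ^ (2 * (i + 1))] := by
  rcases lt_or_ge a b with hab | hba
  · rw [choose_eq_zero_of_lt hab, choose_eq_zero_of_lt ((Nat.mul_lt_mul_left hp.pos).2 hab)]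
  obtain ⟨c, rfl⟩ : ∃ c, a = c + b := ⟨a - b, by omega⟩
  have hc : p ^ i ∣ c := (Nat.dvd_add_left hb).1 ha
  refine ModEq.cancel_right_of_coprime
    (Coprime.pow_left _ (coprime_coprimeAscProd hp (dvd_zero p) (p * b)).symm) ?_
  rw [Nat.mul_add p c b, choose_mul_mul_coprimeAscProd hp.pos]
  exact (coprimeAscProd_modEq_of_pow_dvd hp hp2 hc hb).mul_left _

theorem choose_mul_pow_modEq (hp : p.Prime) (hp2 : p ≠ 2) (n m : ℕ) {i j : ℕ} (hji : j ≤ i) :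
    (n * p ^ i).choose (m * p ^ i) ≡ (n * p ^ j).choose (m * p ^ j) [MOD p ^ (2 * (j + 1))] := by
  induction i, hji using Nat.le_induction with
  | base => rfl
  | succ i hji ih =>
    have hstep := choose_mul_modEq_choose hp hp2 (i := i) (Dvd.intro_left n rfl)
      (Dvd.intro_left m rfl)
    rw [show n * p ^ (i + 1) = p * (n * p ^ i) by ring,
      show m * p ^ (i + 1) = p * (m * p ^ i) by ring]
    exact (hstep.of_dvd (pow_dvd_pow p (by omega))).trans ih

theorem dvd_choose_of_coprime {d N l : ℕ} (hN : d ∣ N) (hl : Coprime d l) : d ∣ N.choose l := by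
  obtain _ | l := l
  · rw [(coprime_zero_right d).1 hl]
    exact one_dvd _
  obtain _ | N := N
  · simp
  · exact hl.dvd_of_dvd_mul_right (add_one_mul_choose_eq N l ▸ dvd_mul_of_dvd_left hN _)

theorem choose_add_modEq_mul_choose (hp : p.Prime) {k N M n₀ m₀ : ℕ} (hN : p ^ k ∣ N)
    (hM : p ∣ M) (hn₀ : n₀ < p) (hm₀ : m₀ < p) :
    (N + n₀).choose (M + m₀) ≡ N.choose M * n₀.choose m₀ [MOD p ^ k] := by
  rw [add_choose_eq]
  refine sum_modEq_single (a := (M, m₀))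
    (fun h => (h (HasAntidiagonal.mem_antidiagonal.2 rfl)).elim) ?_
  rintro ⟨l, t⟩ hlt hne
  simp only [HasAntidiagonal.mem_antidiagonal] at hlt
  rw [modEq_zero_iff_dvd]
  rcases lt_or_ge n₀ t with ht | ht
  · rw [choose_eq_zero_of_lt ht, mul_zero]
    exact dvd_zero _
  refine dvd_mul_of_dvd_left (dvd_choose_of_coprime hN (Coprime.pow_left k
    ((hp.coprime_iff_not_dvd).2 fun hpl => hne ?_))) _
  obtain ⟨l', rfl⟩ := hpl
  obtain ⟨M', rfl⟩ := hM
  have htm : t = m₀ := by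
    simpa [mul_add_mod, mod_eq_of_lt hm₀, mod_eq_of_lt (ht.trans_lt hn₀)] using
      congrArg (· % p) hlt
  subst htm
  rw [Nat.add_right_cancel hlt]

end Nat

theorem stmt10 (k n m n0 m0 : ℕ) (hk : 1 ≤ k) (hn0 : n0 < 3) (hm0 : m0 < 3) :
    (n * 3 ^ k + n0).choose (m * 3 ^ k + m0) ≡
      (n * 3 ^ ((k - 1) / 2)).choose (m * 3 ^ ((k - 1) / 2)) * n0.choose m0 [MOD 3 ^ k] := by
  have hdigits := Nat.choose_add_modEq_mul_choose Nat.prime_three (k := k) (Dvd.intro_left n rfl)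
    (dvd_mul_of_dvd_right (dvd_pow_self 3 (show k ≠ 0 by omega)) m) hn0 hm0
  have hlift := Nat.choose_mul_pow_modEq Nat.prime_three (by norm_num) n m
    (show (k - 1) / 2 ≤ k by omega)
  have hexp : k ≤ 2 * ((k - 1) / 2 + 1) := by omega
  exact hdigits.trans ((hlift.of_dvd (pow_dvd_pow 3 hexp)).mul_right _)
end

section
/- For all nonnegative integers n ≥ m with n ≥ 1, the binomial coefficient C(2n, 2m) is congruent to (−1)^m · C(n, m) modulo 2^(2·ord₂(n)+1), where ord₂(n) is the 2-adic valuation of n. -/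
/-!
Let `f(x) = ∏_{j<m} (x - (2j+1))`. Splitting `(2n)!/(2n-2m)!` into its even and odd factors gives
`C(2n,2m) · (2m-1)!! = C(n,m) · f(2n)`, while `f(0) = (-1)^m (2m-1)!!`. Taylor expansion at `0`
gives `f(2n) ≡ f(0) + 2n f'(0) mod 4n²`, so, `(2m-1)!!` being odd, it suffices that
`2^ord₂(n)` divides `C(n,m) f'(0)`. The roots of `f` are symmetric about `m`, so
`f(2m - x) = (-1)^m f(x)`; for even `m` this gives `f'(2m) = -f'(0)`, and as `2m ∣ f'(2m) - f'(0)`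
we get `m ∣ f'(0)`. Hence `2^ord₂(m) ∣ f'(0)`, and `n ∣ m C(n,m)` gives
`2^ord₂(n) ∣ 2^ord₂(m) C(n,m)`.
-/

open Finset Polynomial

noncomputable def oddRootsPoly (m : ℕ) : ℤ[X] :=
  ∏ j ∈ range m, (X - C (2 * j + 1 : ℤ))

lemma eval_oddRootsPoly (m : ℕ) (x : ℤ) :
    (oddRootsPoly m).eval x = ∏ j ∈ range m, (x - (2 * j + 1)) := by
  simp [oddRootsPoly, eval_prod]

lemma oddRootsPoly_comp_sub (m : ℕ) :
    (oddRootsPoly m).comp (C (2 * m : ℤ) - X) = (-1) ^ m * oddRootsPoly m := by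
  calc (oddRootsPoly m).comp (C (2 * m : ℤ) - X)
      = ∏ j ∈ range m, -(X - C (2 * (m - 1 - j : ℕ) + 1 : ℤ)) := by
        rw [oddRootsPoly, Polynomial.prod_comp]
        refine prod_congr rfl fun j hj => ?_
        have hcast : ((m - 1 - j : ℕ) : ℤ) = m - 1 - j := by
          have := mem_range.mp hj
          omega
        simp only [sub_comp, X_comp, C_comp, hcast]
        simp only [map_add, map_sub, map_mul, map_natCast, map_ofNat, map_one]
        ring
    _ = (-1) ^ m * oddRootsPoly m := by
        rw [prod_neg, card_range, oddRootsPoly,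
          prod_range_reflect (fun j => X - C (2 * j + 1 : ℤ))]

lemma cast_choose_succ_right_mul (N k : ℕ) :
    (N.choose (k + 1) : ℤ) * (k + 1) = N.choose k * (N - k) := by
  rcases le_or_gt k N with h | h
  · have := Nat.choose_succ_right_eq N k
    zify [h] at this
    exact this
  · simp [Nat.choose_eq_zero_of_lt h, Nat.choose_eq_zero_of_lt (h.trans (Nat.lt_succ_self k))]

lemma choose_two_mul_mul_prod_odd (n m : ℕ) :
    ((2 * n).choose (2 * m) : ℤ) * ∏ j ∈ range m, (2 * j + 1 : ℤ)
      = n.choose m * ∏ j ∈ range m, (2 * n - (2 * j + 1) : ℤ) := by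
  induction m with
  | zero => simp
  | succ m ih =>
    have h1 := cast_choose_succ_right_mul (2 * n) (2 * m + 1)
    have h2 := cast_choose_succ_right_mul (2 * n) (2 * m)
    have h3 := cast_choose_succ_right_mul n m
    refine mul_right_cancel₀ (b := (2 * m + 2 : ℤ)) (by positivity) ?_
    rw [show 2 * (m + 1) = 2 * m + 1 + 1 by ring, prod_range_succ, prod_range_succ]
    push_cast at h1 h2 h3 ⊢
    linear_combination (2 * (m : ℤ) + 1) * (∏ j ∈ range m, (2 * j + 1 : ℤ)) * h1
      + (2 * (n : ℤ) - (2 * m + 1)) * (∏ j ∈ range m, (2 * j + 1 : ℤ)) * h2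
      + (2 * (n : ℤ) - 2 * m) * (2 * n - (2 * m + 1)) * ih
      - 2 * (2 * (n : ℤ) - (2 * m + 1)) * (∏ j ∈ range m, (2 * n - (2 * j + 1) : ℤ)) * h3

lemma dvd_two_mul_derivative_eval_zero_of_comp_sub_eq {R : Type*} [CommRing R] {f : R[X]} {b : R}
    (h : f.comp (C b - X) = f) : b ∣ 2 * f.derivative.eval 0 := by
  have hsymm : -f.derivative.eval b = f.derivative.eval 0 := by
    simpa [derivative_comp] using congrArg (fun p => (derivative p).eval 0) h
  have hdvd := sub_dvd_eval_sub b 0 f.derivative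
  rw [sub_zero, ← neg_neg (f.derivative.eval b), hsymm] at hdvd
  convert hdvd.neg_right using 1
  ring

lemma two_pow_dvd_derivative_oddRootsPoly_eval_zero (m : ℕ) :
    (2 : ℤ) ^ m.factorization 2 ∣ (oddRootsPoly m).derivative.eval 0 := by
  rcases Nat.even_or_odd m with ⟨k, rfl⟩ | hodd
  · have hsymm := oddRootsPoly_comp_sub (k + k)
    rw [Even.neg_one_pow ⟨k, rfl⟩, one_mul] at hsymm
    have hdvd : ((k + k : ℕ) : ℤ) ∣ (oddRootsPoly (k + k)).derivative.eval 0 :=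
      (mul_dvd_mul_iff_left two_ne_zero).mp (dvd_two_mul_derivative_eval_zero_of_comp_sub_eq hsymm)
    exact (Int.natCast_dvd_natCast.mpr (Nat.ordProj_dvd (k + k) 2)).trans (by exact_mod_cast hdvd)
  · rw [Nat.factorization_eq_zero_of_not_dvd (Nat.two_dvd_ne_zero.mpr (Nat.odd_iff.mp hodd)),
      pow_zero]
    exact one_dvd _

lemma dvd_mul_choose (n m : ℕ) : n ∣ m * n.choose m := by
  cases m with
  | zero => simp
  | succ k =>
    cases n with
    | zero => simp
    | succ n => exact ⟨n.choose k, by rw [Nat.add_one_mul_choose_eq, mul_comm]⟩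

lemma ordProj_dvd_ordProj_mul_choose {p : ℕ} (hp : p.Prime) (n : ℕ) {m : ℕ} (hm : m ≠ 0) :
    p ^ n.factorization p ∣ p ^ m.factorization p * n.choose m := by
  have h : p ^ n.factorization p ∣
      m / p ^ m.factorization p * (p ^ m.factorization p * n.choose m) := by
    rw [← mul_assoc, mul_comm (m / _), Nat.ordProj_mul_ordCompl_eq_self]
    exact (Nat.ordProj_dvd n p).trans (dvd_mul_choose n m)
  exact ((Nat.coprime_ordCompl hp hm).pow_left _).dvd_of_dvd_mul_left h

lemma two_pow_dvd_choose_mul_derivative_oddRootsPoly_eval_zero (n : ℕ) {m : ℕ} (hm : m ≠ 0) :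
    (2 : ℤ) ^ n.factorization 2 ∣ n.choose m * (oddRootsPoly m).derivative.eval 0 :=
  (Int.natCast_dvd_natCast.mpr (ordProj_dvd_ordProj_mul_choose Nat.prime_two n hm)).trans <| by
    push_cast
    rw [mul_comm]
    exact mul_dvd_mul_left _ (two_pow_dvd_derivative_oddRootsPoly_eval_zero m)

lemma choose_two_mul_sub_mul_prod_odd (n m : ℕ) :
    (((2 * n).choose (2 * m) : ℤ) - (-1) ^ m * n.choose m) * ∏ j ∈ range m, (2 * j + 1 : ℤ)
      = n.choose m * ((oddRootsPoly m).eval (2 * n : ℤ) - (oddRootsPoly m).eval 0) := by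
  have key := choose_two_mul_mul_prod_odd n m
  have hf0 : (oddRootsPoly m).eval 0 = (-1) ^ m * ∏ j ∈ range m, (2 * j + 1 : ℤ) := by
    simp only [eval_oddRootsPoly, zero_sub, prod_neg, card_range]
  rw [← eval_oddRootsPoly] at key
  linear_combination key + (n.choose m : ℤ) * hf0

theorem stmt11_general (n m : ℕ) :
    ((2 * n).choose (2 * m) : ℤ) ≡ (-1) ^ m * n.choose m
      [ZMOD ((2 : ℤ) ^ (2 * n.factorization 2 + 1))] := by
  obtain rfl | hm := eq_or_ne m 0
  · simp
  obtain ⟨k, hk⟩ := binomExpansion (oddRootsPoly m) 0 (2 * n)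
  rw [zero_add] at hk
  have hchoose := two_pow_dvd_choose_mul_derivative_oddRootsPoly_eval_zero n hm
  set v := n.factorization 2
  have h2n : (2 : ℤ) ^ (v + 1) ∣ 2 * n := by
    rw [pow_succ']
    exact mul_dvd_mul_left 2 (by exact_mod_cast Nat.ordProj_dvd n 2)
  have hodd : IsCoprime ((2 : ℤ) ^ (2 * v + 1)) (∏ j ∈ range m, (2 * j + 1 : ℤ)) :=
    IsCoprime.prod_right fun j _ => IsCoprime.pow_left ⟨-j, 1, by ring⟩
  refine (Int.modEq_iff_dvd.mpr (hodd.dvd_of_dvd_mul_right ?_)).symm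
  rw [choose_two_mul_sub_mul_prod_odd, hk,
    show ∀ a b c d : ℤ, c * (a + b * d + k * d ^ 2 - a) = d * (c * b) + c * k * d ^ 2 by
      intros; ring]
  refine dvd_add ?_ (dvd_mul_of_dvd_right ?_ _)
  · rw [show 2 * v + 1 = (v + 1) + v by ring, pow_add]
    exact mul_dvd_mul h2n hchoose
  · calc (2 : ℤ) ^ (2 * v + 1) ∣ (2 ^ (v + 1)) ^ 2 := by
          rw [← pow_mul]
          exact pow_dvd_pow 2 (by omega)
      _ ∣ (2 * n) ^ 2 := pow_dvd_pow_of_dvd h2n 2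

theorem stmt11 (n m : ℕ) (hmn : m ≤ n) (hn : 1 ≤ n) :
    ((2 * n).choose (2 * m) : ℤ) ≡ (-1) ^ m * n.choose m
      [ZMOD ((2 : ℤ) ^ (2 * n.factorization 2 + 1))] :=
  stmt11_general n m
end

section
/- For all nonnegative integers n ≥ m, the binomial coefficient C(2n, 2m) is congruent to C(n, m) modulo 4. -/
/-! Since `(1 + X)^2 = 1 + X^2 + 2X`, Pascal's rule applied twice gives
`C(2n+2, 2m+2) = C(2n, 2m) + 2 C(2n, 2m+1) + C(2n, 2m+2)`, and the middle coefficient is even,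
so modulo 4 the numbers `C(2n, 2m)` obey Pascal's recursion for `C(n, m)`. -/

theorem Nat.two_dvd_choose_two_mul_two_mul_add_one (a b : ℕ) :
    2 ∣ (2 * a).choose (2 * b + 1) := by
  cases a with
  | zero => simp
  | succ a =>
    have h : 2 ∣ (2 * (a + 1)).choose (2 * b + 1) * (2 * b + 1) := by
      rw [show 2 * (a + 1) = 2 * a + 1 + 1 by ring, ← Nat.add_one_mul_choose_eq]
      exact ⟨(a + 1) * (2 * a + 1).choose (2 * b), by ring⟩
    exact (Nat.prime_two.dvd_mul.mp h).resolve_right (by omega)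

theorem Nat.choose_two_mul_add_two (n k : ℕ) :
    (2 * n + 2).choose (k + 2) =
      (2 * n).choose k + 2 * (2 * n).choose (k + 1) + (2 * n).choose (k + 2) := by
  rw [Nat.choose_succ_succ, Nat.choose_succ_succ, Nat.choose_succ_succ (2 * n) (k + 1)]
  ring

theorem stmt13_general (n m : ℕ) :
    (2 * n).choose (2 * m) ≡ n.choose m [MOD 4] := by
  induction n generalizing m with
  | zero => cases m <;> simp [Nat.ModEq, Nat.choose_eq_zero_of_lt]
  | succ n ih =>
    cases m with
    | zero => simp [Nat.ModEq]
    | succ m =>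
      obtain ⟨c, hc⟩ := Nat.two_dvd_choose_two_mul_two_mul_add_one n m
      have hmiddle : 2 * (2 * n).choose (2 * m + 1) ≡ 0 [MOD 4] :=
        Nat.modEq_zero_iff_dvd.mpr ⟨c, by rw [hc]; ring⟩
      rw [show 2 * (n + 1) = 2 * n + 2 by ring, show 2 * (m + 1) = 2 * m + 2 by ring,
        Nat.choose_two_mul_add_two, Nat.choose_succ_succ]
      simpa [mul_add] using ((ih m).add hmiddle).add (ih (m + 1))

theorem stmt13 (n m : ℕ) (hmn : m ≤ n) :
    (2 * n).choose (2 * m) ≡ n.choose m [MOD 4] :=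
  stmt13_general n m
end

section
/- For all nonnegative integers n ≥ m, the binomial coefficient C(4n, 4m) is congruent to C(n, m) modulo 4. -/
/-!
Over `ZMod 4`, `(X + 1) ^ 4 = (X ^ 4 + 1) + 2 X ^ 2` and `(2 X ^ 2) ^ 2 = 0`, so
`(X + 1) ^ (4 n) = (X ^ 4 + 1) ^ n + 2 n (X ^ 4 + 1) ^ (n - 1) X ^ 2`. In the second summand every
exponent is `≡ 2 mod 4`, so comparing coefficients of `X ^ (4 m)` gives `C(4n, 4m) = C(n, m)`.
-/

open Polynomial

theorem add_pow_of_sq_eq_zero {R : Type*} [CommSemiring R] (a : R) {b : R} (hb : b ^ 2 = 0)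
    (n : ℕ) : (a + b) ^ n = a ^ n + n * a ^ (n - 1) * b := by
  induction n with
  | zero => simp
  | succ n ih =>
    rcases n with _ | n
    · simp
    · rw [pow_succ, ih]
      push_cast
      calc _ = a ^ (n + 2) + (n + 2) * a ^ (n + 1) * b + (n + 1) * a ^ n * b ^ 2 := by ring
        _ = _ := by rw [hb]; ring

namespace Polynomial

theorem coeff_expand_mul_X_pow_of_not_modEq {R : Type*} [CommSemiring R] {p : ℕ} (hp : 0 < p)
    (f : R[X]) {k n : ℕ} (h : ¬ n ≡ k [MOD p]) : (expand R p f * X ^ k).coeff n = 0 := by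
  rw [coeff_mul_X_pow']
  split_ifs with hkn
  · rw [coeff_expand hp, if_neg]
    exact fun hdvd => h ((Nat.modEq_iff_dvd' hkn).mpr hdvd).symm
  · rfl

theorem X_add_one_pow_four_zmod_four :
    (X + 1 : (ZMod 4)[X]) ^ 4 = expand (ZMod 4) 4 (X + 1) + C 2 * X ^ 2 := by
  have h4 : (4 : (ZMod 4)[X]) = 0 := by
    rw [← map_ofNat C 4, show (4 : ZMod 4) = 0 from rfl, C_0]
  simp only [map_add, expand_X, map_one, map_ofNat C]
  linear_combination (X ^ 3 + X ^ 2 + X : (ZMod 4)[X]) * h4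

theorem C_two_mul_X_sq_sq_zmod_four : (C 2 * X ^ 2 : (ZMod 4)[X]) ^ 2 = 0 := by
  rw [mul_pow, ← C_pow, show (2 : ZMod 4) ^ 2 = 0 from rfl, C_0, zero_mul]

end Polynomial

theorem stmt14_general (n m : ℕ) :
    (4 * n).choose (4 * m) ≡ n.choose m [MOD 4] := by
  have hcross : ((n : (ZMod 4)[X]) * expand (ZMod 4) 4 (X + 1) ^ (n - 1) * (C 2 * X ^ 2)).coeff
      (4 * m) = 0 := by
    have hshape : (n : (ZMod 4)[X]) * expand (ZMod 4) 4 (X + 1) ^ (n - 1) * (C 2 * X ^ 2) =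
        expand (ZMod 4) 4 (C (2 * n : ZMod 4) * (X + 1) ^ (n - 1)) * X ^ 2 := by
      simp only [map_mul, map_pow, map_natCast, map_ofNat]
      ring
    rw [hshape]
    exact coeff_expand_mul_X_pow_of_not_modEq four_pos _ (by simp [Nat.ModEq])
  rw [← ZMod.natCast_eq_natCast_iff, ← coeff_X_add_one_pow (ZMod 4), pow_mul,
    X_add_one_pow_four_zmod_four, add_pow_of_sq_eq_zero _ C_two_mul_X_sq_sq_zmod_four, coeff_add,
    hcross, add_zero, ← map_pow, coeff_expand_mul' four_pos, coeff_X_add_one_pow]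

theorem stmt14 (n m : ℕ) (hmn : m ≤ n) :
    (4 * n).choose (4 * m) ≡ n.choose m [MOD 4] :=
  stmt14_general n m
end

section
/- Let p ≥ 5 be a prime. If C(np, mp) ≡ C(n, m) (mod p⁴) for all nonnegative integers n ≥ m, then C(n·p⁴ + n₀, m·p⁴ + m₀) ≡ C(n,m)·C(n₀,m₀) (mod p⁴) for all nonnegative integers n, m, n₀, m₀ with n₀ < p and m₀ < p. -/
/-!
Expand `C(n p⁴ + n₀, m p⁴ + m₀)` by Vandermonde as `∑_{i+j = m p⁴ + m₀} C(n p⁴, i) C(n₀, j)`.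
Only `j ≤ n₀ < p` contributes, and then `p ∣ i` forces `(i, j) = (m p⁴, m₀)`; for `p ∤ i` the
identity `i C(N, i) = N C(N - 1, i - 1)` shows `p⁴ ∣ C(n p⁴, i)`. The surviving term is
`C(n p⁴, m p⁴) C(n₀, m₀)`, and applying the hypothesis four times gives `C(n p⁴, m p⁴) ≡ C(n, m)`.
-/

open Finset

lemma Nat.dvd_choose_of_dvd_of_coprime {d N i : ℕ} (hN : d ∣ N) (hi : d.Coprime i) :
    d ∣ N.choose i := by
  rcases i with _ | i
  · simp [(coprime_zero_right d).mp hi]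
  rcases N with _ | N
  · simp
  exact hi.dvd_of_dvd_mul_right <| (add_one_mul_choose_eq N i) ▸ dvd_mul_of_dvd_left hN _

lemma Nat.eq_of_mul_add_eq_mul_add {p a b r s : ℕ} (hr : r < p) (hs : s < p)
    (h : p * a + r = p * b + s) : r = s := by
  have := congrArg (· % p) h
  simpa [Nat.mul_add_mod, Nat.mod_eq_of_lt hr, Nat.mod_eq_of_lt hs] using this

lemma Nat.choose_add_modEq_choose_mul_choose {p k N M n₀ m₀ : ℕ} (hp : p.Prime)
    (hN : p ^ k ∣ N) (hM : p ∣ M) (hn₀ : n₀ < p) (hm₀ : m₀ < p) :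
    (N + n₀).choose (M + m₀) ≡ N.choose M * n₀.choose m₀ [MOD p ^ k] := by
  have hmem : (M, m₀) ∈ antidiagonal (M + m₀) := mem_antidiagonal.mpr rfl
  rw [add_choose_eq, ← add_sum_erase _ _ hmem]
  conv_rhs => rw [← add_zero (N.choose M * n₀.choose m₀)]
  refine (Nat.modEq_zero_iff_dvd.mpr (dvd_sum fun ⟨i, j⟩ hij => ?_)).add_left _
  obtain ⟨hne, hij⟩ := mem_erase.mp hij
  rw [HasAntidiagonal.mem_antidiagonal] at hij
  rcases lt_or_ge n₀ j with hj | hj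
  · simp [choose_eq_zero_of_lt hj]
  refine dvd_mul_of_dvd_left (dvd_choose_of_dvd_of_coprime hN (Coprime.pow_left _ ?_)) _
  refine (hp.coprime_iff_not_dvd).mpr fun ⟨a, hi⟩ => hne ?_
  obtain ⟨b, rfl⟩ := hM
  have hjm : j = m₀ := eq_of_mul_add_eq_mul_add (hj.trans_lt hn₀) hm₀ (hi ▸ hij)
  simp only [Prod.mk.injEq]
  omega

lemma Nat.choose_mul_pow_modEq_choose {p q : ℕ} (hp : 0 < p)
    (h : ∀ n m : ℕ, m ≤ n → (n * p).choose (m * p) ≡ n.choose m [MOD q]) (k n m : ℕ) :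
    (n * p ^ k).choose (m * p ^ k) ≡ n.choose m [MOD q] := by
  rcases le_or_gt m n with hmn | hnm
  · induction k with
    | zero => simp only [pow_zero, mul_one, Nat.ModEq.refl]
    | succ k ih =>
      rw [pow_succ, ← mul_assoc, ← mul_assoc]
      exact (h _ _ (Nat.mul_le_mul_right _ hmn)).trans ih
  · rw [choose_eq_zero_of_lt hnm,
      choose_eq_zero_of_lt (Nat.mul_lt_mul_of_pos_right hnm (pow_pos hp k))]

theorem stmt16_general (p : ℕ) (hp : p.Prime)
    (h : ∀ n m : ℕ, m ≤ n → (n * p).choose (m * p) ≡ n.choose m [MOD p ^ 4]) :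
    ∀ n m n0 m0 : ℕ, n0 < p → m0 < p →
      (n * p ^ 4 + n0).choose (m * p ^ 4 + m0) ≡ n.choose m * n0.choose m0 [MOD p ^ 4] := by
  intro n m n0 m0 hn0 hm0
  have hpM : p ∣ m * p ^ 4 := dvd_mul_of_dvd_right (dvd_pow_self p four_ne_zero) m
  calc (n * p ^ 4 + n0).choose (m * p ^ 4 + m0)
      ≡ (n * p ^ 4).choose (m * p ^ 4) * n0.choose m0 [MOD p ^ 4] :=
        Nat.choose_add_modEq_choose_mul_choose hp (dvd_mul_left _ n) hpM hn0 hm0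
    _ ≡ n.choose m * n0.choose m0 [MOD p ^ 4] :=
        (Nat.choose_mul_pow_modEq_choose hp.pos h 4 n m).mul_right _

theorem stmt16 (p : ℕ) (hp : p.Prime) (hp5 : 5 ≤ p)
    (h : ∀ n m : ℕ, m ≤ n → (n * p).choose (m * p) ≡ n.choose m [MOD p ^ 4]) :
    ∀ n m n0 m0 : ℕ, n0 < p → m0 < p →
      (n * p ^ 4 + n0).choose (m * p ^ 4 + m0) ≡ n.choose m * n0.choose m0 [MOD p ^ 4] :=
  stmt16_general p hp h
end

section
/- Let p ≥ 5 be a prime. If C(n·p⁴ + n₀, m·p⁴ + m₀) ≡ C(n,m)·C(n₀,m₀) (mod p⁴) holds for all nonnegative integers n, m, n₀, m₀ with n₀ < p and m₀ < p, then C(2p, p) ≡ 2 (mod p⁴), i.e., p is a Wolstenholme prime. -/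
/-!
Vandermonde gives `C(2N, N) = ∑ⱼ C(N, j)²`. For `N = p^(k+1)` the terms with `p^k ∤ j` vanish
modulo `p⁴`, because Kummer puts `p²` into `C(N, j)`; the term `j = t p^k` is `C(p, t)²` modulo
`p⁴`, because `C(p^(k+1), t p^k) ≡ C(p, t) (mod p³)` and `p ∣ C(p, t)`. Hence
`C(2p⁴, p⁴) ≡ C(2p, p)`, while the hypothesis with `n = 2`, `m = 1` gives `C(2p⁴, p⁴) ≡ 2`.

The congruence modulo `p³` is iterated from `C(pn, pm) · ∏ i = C(n, m) · ∏ (pn - i)`, both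
products over `0 < i < pm` prime to `p`: if `p ∣ n` and `p` is odd, the two products agree modulo
`p²`, and `p ∣ C(n, m)` supplies the third factor `p`.
-/

open Finset

theorem Int.ModEq.sq_mul {a b m d : ℤ} (h : a ≡ b [ZMOD m]) (hdm : d ∣ m) (hdb : d ∣ b) :
    a ^ 2 ≡ b ^ 2 [ZMOD m * d] := by
  rw [Int.modEq_iff_dvd] at h ⊢
  have hd : d ∣ b + a := by
    rw [show b + a = 2 * b - (b - a) by ring]
    exact dvd_sub (hdb.mul_left 2) (hdm.trans h)
  rw [sq_sub_sq, mul_comm m d]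
  exact mul_dvd_mul hd h

namespace Nat

def nonMultiples (p n : ℕ) : Finset ℕ := {i ∈ range n | ¬ p ∣ i}

variable {p : ℕ}

@[simp]
theorem mem_nonMultiples {n i : ℕ} : i ∈ nonMultiples p n ↔ i < n ∧ ¬ p ∣ i := by
  simp [nonMultiples]

theorem filter_dvd_range_mul (hp : 0 < p) (m : ℕ) :
    {i ∈ range (p * m) | p ∣ i} = (range m).map ⟨(p * ·), mul_right_injective₀ hp.ne'⟩ := by
  ext i
  simp only [mem_filter, mem_range, mem_map, Function.Embedding.coeFn_mk]
  constructor
  · rintro ⟨hi, j, rfl⟩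
    exact ⟨j, lt_of_mul_lt_mul_left hi (Nat.zero_le p), rfl⟩
  · rintro ⟨j, hj, rfl⟩
    exact ⟨Nat.mul_lt_mul_of_pos_left hj hp, dvd_mul_right p j⟩

theorem prod_range_mul_eq_prod_nonMultiples_mul {M : Type*} [CommMonoid M] (hp : 0 < p) (m : ℕ)
    (f : ℕ → M) :
    ∏ i ∈ range (p * m), f i = (∏ i ∈ nonMultiples p (p * m), f i) * ∏ j ∈ range m, f (p * j) := by
  rw [← prod_filter_not_mul_prod_filter _ (p ∣ ·), filter_dvd_range_mul hp, prod_map]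
  rfl

theorem card_nonMultiples_mul (hp : 0 < p) (m : ℕ) : #(nonMultiples p (p * m)) = (p - 1) * m := by
  have := card_filter_add_card_filter_not (s := range (p * m)) (p ∣ ·)
  rw [filter_dvd_range_mul hp, card_map, card_range, card_range] at this
  rw [nonMultiples, Nat.sub_mul, one_mul]
  omega

theorem cast_descFactorial_mul_mul (hp : 0 < p) (n m : ℕ) :
    ((p * n).descFactorial (p * m) : ℤ) =
      (∏ i ∈ nonMultiples p (p * m), (p * n - i : ℤ)) * p ^ m * n.descFactorial m := by
  simp only [← descPochhammer_eval_eq_descFactorial, descPochhammer_eval_eq_prod_range]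
  rw [prod_range_mul_eq_prod_nonMultiples_mul hp, mul_assoc]
  congr 1
  push_cast
  simp only [← mul_sub, prod_mul_distrib, prod_const, card_range]

theorem prod_nonMultiples_mul_reflect (m : ℕ) :
    ∏ i ∈ nonMultiples p (p * m), (p * m - i : ℤ) = ∏ i ∈ nonMultiples p (p * m), (i : ℤ) := by
  have mem : ∀ i ∈ nonMultiples p (p * m), p * m - i ∈ nonMultiples p (p * m) := by
    simp only [mem_nonMultiples]
    rintro i ⟨hi, hpi⟩
    have hi0 : i ≠ 0 := by rintro rfl; exact hpi (dvd_zero p)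
    refine ⟨by omega, fun h ↦ hpi ?_⟩
    simpa [Nat.sub_sub_self hi.le] using Nat.dvd_sub (dvd_mul_right p m) h
  have le : ∀ i ∈ nonMultiples p (p * m), i ≤ p * m := fun i hi ↦ (mem_nonMultiples.mp hi).1.le
  refine prod_nbij' (p * m - ·) (p * m - ·) mem mem (fun i hi ↦ Nat.sub_sub_self (le i hi))
    (fun i hi ↦ Nat.sub_sub_self (le i hi)) fun i hi ↦ ?_
  push_cast [le i hi]
  rfl

theorem cast_choose_mul_mul_mul_prod_nonMultiples (hp : 0 < p) (n m : ℕ) :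
    ((p * n).choose (p * m) : ℤ) * ∏ i ∈ nonMultiples p (p * m), (i : ℤ) =
      n.choose m * ∏ i ∈ nonMultiples p (p * m), (p * n - i : ℤ) := by
  have hN := cast_descFactorial_mul_mul hp n m
  have hM := cast_descFactorial_mul_mul hp m m
  rw [prod_nonMultiples_mul_reflect, descFactorial_self, descFactorial_self] at hM
  rw [descFactorial_eq_factorial_mul_choose, descFactorial_eq_factorial_mul_choose] at hN
  have h0 : ((p : ℤ) ^ m * m ! : ℤ) ≠ 0 := by positivity
  apply mul_left_cancel₀ h0
  push_cast at hN hM ⊢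
  linear_combination hN - (p * n).choose (p * m) * hM

theorem prod_nonMultiples_sub_modEq (hodd : Odd p) {n : ℕ} (hn : p ∣ n) (m : ℕ) :
    ∏ i ∈ nonMultiples p (p * m), (p * n - i : ℤ) ≡ ∏ i ∈ nonMultiples p (p * m), (i : ℤ)
      [ZMOD p ^ 2] := by
  have hpn : (p * n : ZMod (p ^ 2)) = 0 := by
    exact_mod_cast (ZMod.natCast_eq_zero_iff _ _).mpr (by rw [sq]; exact mul_dvd_mul_left p hn)
  have heven : Even #(nonMultiples p (p * m)) := by
    rw [card_nonMultiples_mul hodd.pos]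
    exact (Nat.Odd.sub_odd hodd odd_one).mul_right m
  rw [← Nat.cast_pow, ← ZMod.intCast_eq_intCast_iff]
  push_cast
  rw [hpn]
  simp only [zero_sub, prod_neg, heven.neg_one_pow, one_mul]

theorem not_dvd_prod_nonMultiples (hp : p.Prime) (n : ℕ) :
    ¬ (p : ℤ) ∣ ∏ i ∈ nonMultiples p n, (i : ℤ) := by
  rw [Prime.dvd_finsetProd_iff (Nat.prime_iff_prime_int.mp hp)]
  rintro ⟨i, hi, hpi⟩
  exact (mem_nonMultiples.mp hi).2 (Int.natCast_dvd_natCast.mp hpi)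

theorem choose_mul_mul_modEq (hp : p.Prime) (hodd : Odd p) {n m : ℕ} (hn : p ∣ n)
    (hc : (p : ℤ) ∣ n.choose m) : ((p * n).choose (p * m) : ℤ) ≡ n.choose m [ZMOD p ^ 3] := by
  set U := ∏ i ∈ nonMultiples p (p * m), (i : ℤ)
  set V := ∏ i ∈ nonMultiples p (p * m), (p * n - i : ℤ)
  have hUV : (p : ℤ) ^ 2 ∣ V - U := (prod_nonMultiples_sub_modEq hodd hn m).symm.dvd
  have hcop : IsCoprime ((p : ℤ) ^ 3) U :=
    ((Nat.prime_iff_prime_int.mp hp).coprime_iff_not_dvd.mpr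
      (not_dvd_prod_nonMultiples hp _)).pow_left
  refine (Int.modEq_iff_dvd.mpr (hcop.dvd_of_dvd_mul_right ?_)).symm
  have key : ((p * n).choose (p * m) - n.choose m : ℤ) * U = n.choose m * (V - U) := by
    linear_combination cast_choose_mul_mul_mul_prod_nonMultiples hp.pos n m
  rw [key, show (p : ℤ) ^ 3 = p * p ^ 2 by ring]
  exact mul_dvd_mul hc hUV

theorem choose_prime_pow_succ_mul_modEq (hp : p.Prime) (hodd : Odd p) {t : ℕ} (ht0 : t ≠ 0)
    (htp : t < p) (k : ℕ) : ((p ^ (k + 1)).choose (t * p ^ k) : ℤ) ≡ p.choose t [ZMOD p ^ 3] := by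
  induction k with
  | zero => simp
  | succ k ih =>
    have hc : (p : ℤ) ∣ (p ^ (k + 1)).choose (t * p ^ k) :=
      ((ih.of_dvd (dvd_pow_self _ three_ne_zero)).dvd_iff).mpr
        (Int.natCast_dvd_natCast.mpr (hp.dvd_choose_self ht0 htp))
    rw [show p ^ (k + 1 + 1) = p * p ^ (k + 1) by ring,
      show t * p ^ (k + 1) = p * (t * p ^ k) by ring]
    exact (choose_mul_mul_modEq hp hodd (dvd_pow_self p k.succ_ne_zero) hc).trans ih

theorem pow_dvd_choose_prime_pow (hp : p.Prime) {n e k : ℕ} (hkn : k ≤ p ^ n)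
    (hk : ¬ p ^ e ∣ k) : p ^ (n + 1 - e) ∣ (p ^ n).choose k := by
  have hk0 : k ≠ 0 := by rintro rfl; exact hk (dvd_zero _)
  have hlt : k.factorization p < e := by
    by_contra! h
    exact hk ((hp.pow_dvd_iff_le_factorization hk0).mpr h)
  rw [hp.pow_dvd_iff_le_factorization (choose_pos hkn).ne',
    factorization_choose_prime_pow hp hkn hk0]
  omega

theorem choose_prime_pow_succ_mul_sq_modEq (hp : p.Prime) (hodd : Odd p) {t : ℕ} (ht : t ≤ p)
    (k : ℕ) : ((p ^ (k + 1)).choose (t * p ^ k)) ^ 2 ≡ (p.choose t) ^ 2 [MOD p ^ 4] := by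
  rcases eq_or_ne t 0 with rfl | ht0
  · simp only [zero_mul, choose_zero_right]
    rfl
  rcases ht.eq_or_lt with rfl | htp
  · rw [← pow_succ', choose_self, choose_self]
  rw [← Int.natCast_modEq_iff]
  push_cast
  have hpc : (p : ℤ) ∣ p.choose t := Int.natCast_dvd_natCast.mpr (hp.dvd_choose_self ht0 htp)
  simpa only [← pow_succ] using
    (choose_prime_pow_succ_mul_modEq hp hodd ht0 htp k).sq_mul (dvd_pow_self _ three_ne_zero) hpc

theorem choose_two_mul_prime_pow_modEq (hp : p.Prime) (hodd : Odd p) (k : ℕ) :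
    (2 * p ^ (k + 1)).choose (p ^ (k + 1)) ≡ (2 * p).choose p [MOD p ^ 4] := by
  rw [← ZMod.natCast_eq_natCast_iff, ← sum_range_choose_sq, ← sum_range_choose_sq]
  push_cast
  symm
  refine sum_of_injOn (· * p ^ k) ?_ ?_ ?_ ?_
  · exact fun a _ b _ h ↦ Nat.eq_of_mul_eq_mul_right (pow_pos hp.pos k) h
  · intro t ht
    simp only [coe_range, Set.mem_Iio] at ht ⊢
    rw [pow_succ']
    exact Nat.lt_succ_of_le (Nat.mul_le_mul_right _ (Nat.lt_succ_iff.mp ht))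
  · intro j hj hj'
    have hjp : j ≤ p ^ (k + 1) := Nat.lt_succ_iff.mp (mem_range.mp hj)
    have hndvd : ¬ p ^ k ∣ j := by
      rintro ⟨c, rfl⟩
      refine hj' ⟨c, ?_, mul_comm _ _⟩
      rw [pow_succ', mul_comm] at hjp
      exact mem_coe.mpr (mem_range.mpr
        (Nat.lt_succ_of_le (Nat.le_of_mul_le_mul_right hjp (pow_pos hp.pos k))))
    have h2 := pow_dvd_choose_prime_pow hp hjp hndvd
    rw [show k + 1 + 1 - k = 2 by omega] at h2
    exact_mod_cast (ZMod.natCast_eq_zero_iff _ _).mpr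
      (by simpa [← pow_mul] using pow_dvd_pow_of_dvd h2 2)
  · intro t ht
    exact_mod_cast ((ZMod.natCast_eq_natCast_iff _ _ _).mpr
      (choose_prime_pow_succ_mul_sq_modEq hp hodd (Nat.lt_succ_iff.mp (mem_range.mp ht)) k)).symm

end Nat

theorem stmt17 (p : ℕ) (hp : p.Prime) (hp5 : 5 ≤ p)
    (h : ∀ n m n0 m0 : ℕ, n0 < p → m0 < p →
      (n * p ^ 4 + n0).choose (m * p ^ 4 + m0) ≡ n.choose m * n0.choose m0 [MOD p ^ 4]) :
    (2 * p).choose p ≡ 2 [MOD p ^ 4] := by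
  have hodd : Odd p := hp.odd_of_ne_two (by omega)
  have h2 := h 2 1 0 0 hp.pos hp.pos
  simp only [add_zero, one_mul, Nat.choose_one_right, Nat.choose_zero_right, mul_one] at h2
  exact (Nat.choose_two_mul_prime_pow_modEq hp hodd 3).symm.trans h2
end
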